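/- arXiv:1906.00036 — 9 statements merged into one kernel-verified Lean document; each statement's English description precedes it below -/
import Mathlib

section
/- For the set partition lattice Πₙ ordered by refinement, the Möbius function from the bottom element (the partition into singletons) to a partition π = {B₁,...,B_k} equals (−1)^{n−k} ∏_{i=1}^{k} (#B_i − 1)!. -/
/-!
Put `v(m) = (-1)^(m-1) (m-1)!` and `w(τ) = ∏_{C ∈ τ} v(#C)`. Then
`∑_{τ ≤ ρ} w(τ) = ∏_{B ∈ ρ} [#B ≤ 1]`, which is `1` for `ρ = ⊥` and `0` otherwise; as these sums
determine a function on a finite poset, `μ = w`.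

The identity is proved by induction on the ground set. Fix a point `a`: a partition `τ ≤ ρ` is the
same as its block `C ∋ a`, a subset of the block `B` of `ρ` containing `a`, together with a
partition of the rest lying below `ρ.avoid C`. After the induction hypothesis only `C = B` and the
`#B - 1` sets `C = B \ {x}` contribute, and `v(#B) + (#B - 1) v(#B - 1)` vanishes once `#B ≥ 2`.
-/

open scoped Classical

open Finset
open scoped Nat

theorem eq_of_forall_sum_le_eq {P M : Type*} [PartialOrder P] [Fintype P] [AddCommGroup M]
    {f g : P → M}
    (h : ∀ ρ, ∑ τ, (if τ ≤ ρ then f τ else 0) = ∑ τ, (if τ ≤ ρ then g τ else 0)) :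
    f = g := by
  funext ρ
  induction ρ using WellFoundedLT.induction with
  | _ ρ ih =>
    have hsplit (F : P → M) :
        ∑ τ, (if τ ≤ ρ then F τ else 0) = F ρ + ∑ τ, (if τ < ρ then F τ else 0) := by
      rw [← Fintype.sum_ite_eq' ρ F, ← sum_add_distrib]
      refine Fintype.sum_congr _ _ fun τ => ?_
      rcases eq_or_ne τ ρ with rfl | hne
      · simp
      · simp [hne, le_iff_lt_or_eq]
    have hlt : ∑ τ, (if τ < ρ then f τ else 0) = ∑ τ, (if τ < ρ then g τ else 0) :=
      Fintype.sum_congr _ _ fun τ => by split_ifs with hτ; exacts [ih τ hτ, rfl]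
    simpa [hsplit, hlt] using h ρ

namespace Finpartition

variable {α : Type*} [DecidableEq α] {s B C : Finset α} {a : α}

lemma parts_avoid_of_mem (P : Finpartition s) (hC : C ∈ P.parts) :
    (P.avoid C).parts = P.parts.erase C := by
  ext d
  rw [mem_avoid, mem_erase]
  constructor
  · rintro ⟨e, he, hne, rfl⟩
    have hec : e ≠ C := by rintro rfl; exact hne le_rfl
    have hdis : Disjoint e C := P.disjoint he hC hec
    rw [sdiff_eq_self_of_disjoint hdis]
    exact ⟨hec, he⟩
  · rintro ⟨hne, hd⟩
    have hdis : Disjoint d C := P.disjoint hd hC hne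
    exact ⟨d, hd, fun hle => P.ne_bot hd (hdis.eq_bot_of_le hle), sdiff_eq_self_of_disjoint hdis⟩

lemma parts_avoid_of_ssubset (P : Finpartition s) (hB : B ∈ P.parts) (hCB : C ⊂ B) :
    (P.avoid C).parts = insert (B \ C) (P.parts.erase B) := by
  ext d
  rw [mem_avoid, mem_insert, mem_erase]
  constructor
  · rintro ⟨e, he, hne, rfl⟩
    by_cases heB : e = B
    · exact Or.inl (heB ▸ rfl)
    · have hdis : Disjoint e B := P.disjoint he hB heB
      rw [sdiff_eq_self_of_disjoint (hdis.mono_right hCB.subset)]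
      exact Or.inr ⟨heB, he⟩
  · rintro (rfl | ⟨hne, hd⟩)
    · exact ⟨B, hB, not_subset_of_ssubset hCB, rfl⟩
    · have hdis : Disjoint d C := (P.disjoint hd hB hne).mono_right hCB.subset
      exact ⟨d, hd, fun hle => P.ne_bot hd (hdis.eq_bot_of_le hle), sdiff_eq_self_of_disjoint hdis⟩

lemma avoid_mono {P Q : Finpartition s} (h : P ≤ Q) (C : Finset α) : P.avoid C ≤ Q.avoid C := by
  intro d hd
  obtain ⟨e, he, hne, rfl⟩ := (mem_avoid _).1 hd
  obtain ⟨g, hg, heg⟩ := h he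
  exact ⟨g \ C, (mem_avoid _).2 ⟨g, hg, fun hle => hne (heg.trans hle), rfl⟩,
    sdiff_subset_sdiff heg le_rfl⟩

lemma part_subset_part_of_le {P Q : Finpartition s} (h : P ≤ Q) (ha : a ∈ s) :
    P.part a ⊆ Q.part a := by
  obtain ⟨e, he, hle⟩ := h (P.part_mem.2 ha)
  rwa [← Q.part_eq_of_mem he (hle (P.mem_part ha))] at hle

lemma notMem_parts_of_nonempty (P : Finpartition (s \ C)) (hC : C.Nonempty) : C ∉ P.parts :=
  fun hmem => hC.ne_empty (disjoint_self.1 (disjoint_sdiff_self_left.mono_left (P.le hmem)))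

lemma parts_extendOfLE_sdiff (P : Finpartition (s \ C)) (hC : C.Nonempty) (hCs : C ⊆ s) :
    (P.extendOfLE sdiff_le).parts = insert C P.parts := by
  rw [parts_extendOfLE_of_lt _ (sdiff_ssubset hCs hC), Finset.sdiff_sdiff_eq_self hCs]

lemma extendOfLE_avoid_part (P : Finpartition s) (ha : a ∈ s) :
    (P.avoid (P.part a)).extendOfLE sdiff_le = P := by
  ext1
  rw [parts_extendOfLE_sdiff _ (P.part_nonempty.2 ha) (P.part_subset a),
    parts_avoid_of_mem _ (P.part_mem.2 ha), insert_erase (P.part_mem.2 ha)]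

lemma part_extendOfLE_sdiff (P : Finpartition (s \ C)) (hCs : C ⊆ s) (haC : a ∈ C) :
    (P.extendOfLE sdiff_le).part a = C := by
  refine part_eq_of_mem _ ?_ haC
  rw [parts_extendOfLE_sdiff _ ⟨a, haC⟩ hCs]
  exact mem_insert_self _ _

lemma avoid_extendOfLE_sdiff (P : Finpartition (s \ C)) (hC : C.Nonempty) (hCs : C ⊆ s) :
    (P.extendOfLE sdiff_le).avoid C = P := by
  ext1
  rw [parts_avoid_of_mem _ (by rw [parts_extendOfLE_sdiff _ hC hCs]; exact mem_insert_self _ _),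
    parts_extendOfLE_sdiff _ hC hCs, erase_insert (P.notMem_parts_of_nonempty hC)]

lemma eq_bot_of_forall_card_le_one (ρ : Finpartition s)
    (h : ∀ B ∈ ρ.parts, #B ≤ 1) : ρ = ⊥ := by
  refine le_antisymm (fun B hB => ?_) bot_le
  obtain ⟨x, rfl⟩ := card_eq_one.1 (le_antisymm (h B hB) (ρ.nonempty_of_mem_parts hB).card_pos)
  exact ⟨{x}, mem_bot_iff.2 ⟨x, ρ.le hB (mem_singleton_self x), rfl⟩, le_rfl⟩

theorem sum_le_eq_sum_sum_le_avoid {M : Type*} [AddCommMonoid M] (ρ : Finpartition s)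
    (ha : a ∈ s) (F : Finpartition s → M) :
    ∑ τ, (if τ ≤ ρ then F τ else 0) =
      ∑ C ∈ (ρ.part a).powerset with a ∈ C,
        ∑ σ : Finpartition (s \ C), if σ ≤ ρ.avoid C then F (σ.extendOfLE sdiff_le) else 0 := by
  simp only [← sum_filter]
  rw [sum_sigma']
  refine sum_nbij' (fun τ => ⟨τ.part a, τ.avoid (τ.part a)⟩)
    (fun x => x.2.extendOfLE sdiff_le) ?_ ?_ ?_ ?_ ?_
  · intro τ hτ
    have hτρ : τ ≤ ρ := (mem_filter.1 hτ).2
    simp only [mem_sigma, mem_filter, mem_powerset, mem_univ, true_and]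
    exact ⟨⟨part_subset_part_of_le hτρ ha, τ.mem_part ha⟩, avoid_mono hτρ _⟩
  · rintro ⟨C, σ⟩ hx
    simp only [mem_sigma, mem_filter, mem_powerset, mem_univ, true_and] at hx ⊢
    obtain ⟨⟨hCB, haC⟩, hσ⟩ := hx
    intro d hd
    rw [parts_extendOfLE_sdiff _ ⟨a, haC⟩ (hCB.trans (ρ.part_subset a)), mem_insert] at hd
    rcases hd with rfl | hd
    · exact ⟨ρ.part a, ρ.part_mem.2 ha, hCB⟩
    · obtain ⟨e, he, hde⟩ := hσ hd
      obtain ⟨g, hg, -, rfl⟩ := (mem_avoid _).1 he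
      exact ⟨g, hg, hde.trans sdiff_subset⟩
  · intro τ _
    exact extendOfLE_avoid_part τ ha
  · rintro ⟨C, σ⟩ hx
    simp only [mem_sigma, mem_filter, mem_powerset, mem_univ, true_and] at hx
    obtain ⟨⟨hCB, haC⟩, -⟩ := hx
    have hCs : C ⊆ s := hCB.trans (ρ.part_subset a)
    dsimp only
    rw [part_extendOfLE_sdiff σ hCs haC, avoid_extendOfLE_sdiff σ ⟨a, haC⟩ hCs]
  · intro τ _
    rw [extendOfLE_avoid_part τ ha]

end Finpartition

def blockWeight (m : ℕ) : ℤ := (-1) ^ (m - 1) * (m - 1)!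

def leOneIndicator (m : ℕ) : ℤ := if m ≤ 1 then 1 else 0

section Weight

variable {α : Type*} [DecidableEq α] {s : Finset α}

def partitionWeight (τ : Finpartition s) : ℤ := ∏ C ∈ τ.parts, blockWeight #C

lemma blockWeight_add_two (k : ℕ) :
    blockWeight (k + 2) + (k + 1 : ℕ) * blockWeight (k + 1) = 0 := by
  rw [blockWeight, blockWeight, show k + 2 - 1 = k + 1 by omega, Nat.add_sub_cancel,
    Nat.factorial_succ]
  push_cast
  ring

lemma sum_blockWeight_mul_leOneIndicator {B : Finset α} {a : α} (ha : a ∈ B) :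
    ∑ C ∈ B.powerset with a ∈ C, blockWeight #C * leOneIndicator #(B \ C) =
      leOneIndicator #B := by
  set T := B.erase a
  have hT : a ∉ T := notMem_erase a B
  have himage : {C ∈ B.powerset | a ∈ C} = T.powerset.image (insert a) := by
    ext C
    simp only [mem_filter, mem_powerset, mem_image]
    constructor
    · rintro ⟨hCB, haC⟩
      exact ⟨C.erase a, erase_subset_erase a hCB, insert_erase haC⟩
    · rintro ⟨D, hDT, rfl⟩
      exact ⟨insert_subset ha (hDT.trans (erase_subset a B)), mem_insert_self a D⟩
  have hinj : Set.InjOn (insert a) (T.powerset : Set (Finset α)) := fun D hD D' hD' h => by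
    rw [← erase_insert (notMem_mono (mem_powerset.1 hD) hT), h,
      erase_insert (notMem_mono (mem_powerset.1 hD') hT)]
  have hterm : ∀ D ∈ T.powerset, blockWeight #(insert a D) * leOneIndicator #(B \ insert a D) =
      blockWeight (#D + 1) * leOneIndicator (#T - #D) := by
    intro D hD
    have hDT := mem_powerset.1 hD
    rw [card_insert_of_notMem (notMem_mono hDT hT), ← card_sdiff_of_subset hDT, sdiff_insert,
      ← erase_sdiff_comm]
  rw [himage, sum_image hinj, sum_congr rfl hterm,
    sum_powerset_apply_card (fun m => blockWeight (m + 1) * leOneIndicator (#T - m)),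
    ← card_erase_add_one ha]
  generalize #T = k
  match k with
  | 0 => simp [blockWeight, leOneIndicator]
  | j + 1 =>
    have hsmall : ∀ m ∈ range j,
        (j + 1).choose m • (blockWeight (m + 1) * leOneIndicator (j + 1 - m)) = 0 := by
      intro m hm
      rw [leOneIndicator, if_neg (by have := mem_range.1 hm; omega), mul_zero, smul_zero]
    rw [sum_range_succ, sum_range_succ, sum_eq_zero hsmall, Nat.choose_succ_self_right,
      Nat.choose_self]
    simp only [leOneIndicator, show j + 1 - j = 1 by omega, Nat.sub_self, le_refl, zero_le,
      if_true, mul_one, zero_add, one_smul, nsmul_eq_mul, if_neg (by omega : ¬j + 1 + 1 ≤ 1)]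
    rw [← blockWeight_add_two j]
    ring

lemma partitionWeight_extendOfLE_sdiff {C : Finset α} (σ : Finpartition (s \ C))
    (hC : C.Nonempty) (hCs : C ⊆ s) :
    partitionWeight (σ.extendOfLE sdiff_le) = blockWeight #C * partitionWeight σ := by
  rw [partitionWeight, σ.parts_extendOfLE_sdiff hC hCs,
    prod_insert (σ.notMem_parts_of_nonempty hC), partitionWeight]

lemma prod_leOneIndicator_avoid (ρ : Finpartition s) {B C : Finset α} (hB : B ∈ ρ.parts)
    (hCB : C ⊆ B) :
    ∏ D ∈ (ρ.avoid C).parts, leOneIndicator #D =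
      (∏ D ∈ ρ.parts.erase B, leOneIndicator #D) * leOneIndicator #(B \ C) := by
  rcases hCB.eq_or_ssubset with rfl | hCB
  · rw [ρ.parts_avoid_of_mem hB, Finset.sdiff_self, card_empty, leOneIndicator, if_pos zero_le_one,
      mul_one]
  · have hnew : B \ C ∉ ρ.parts.erase B := fun hmem => by
      obtain ⟨hne, hmem⟩ := mem_erase.1 hmem
      have hdis : Disjoint (B \ C) B := ρ.disjoint hmem hB hne
      exact (sdiff_nonempty.2 (not_subset_of_ssubset hCB)).ne_empty
        (hdis.eq_bot_of_le sdiff_subset)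
    rw [ρ.parts_avoid_of_ssubset hB hCB, prod_insert hnew, mul_comm]

theorem sum_le_partitionWeight (ρ : Finpartition s) :
    ∑ τ, (if τ ≤ ρ then partitionWeight τ else 0) = ∏ B ∈ ρ.parts, leOneIndicator #B := by
  induction s using Finset.strongInduction with
  | H s ih =>
  rcases s.eq_empty_or_nonempty with rfl | ⟨a, ha⟩
  · have hempty (τ : Finpartition (∅ : Finset α)) : τ.parts = ∅ :=
      Finpartition.parts_eq_empty_iff.2 bot_eq_empty.symm
    rw [Fintype.sum_eq_single ρ fun τ hτ => (hτ (Finpartition.ext (by rw [hempty, hempty]))).elim,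
      if_pos le_rfl, partitionWeight, hempty, prod_empty, prod_empty]
  set B := ρ.part a
  have hB : B ∈ ρ.parts := ρ.part_mem.2 ha
  rw [ρ.sum_le_eq_sum_sum_le_avoid ha]
  calc
    _ = ∑ C ∈ B.powerset with a ∈ C, blockWeight #C *
          ((∏ D ∈ ρ.parts.erase B, leOneIndicator #D) * leOneIndicator #(B \ C)) := by
      refine sum_congr rfl fun C hC => ?_
      obtain ⟨hCB, haC⟩ : C ⊆ B ∧ a ∈ C := by simpa using hC
      have hCs : C ⊆ s := hCB.trans (ρ.part_subset a)
      simp only [partitionWeight_extendOfLE_sdiff _ ⟨a, haC⟩ hCs, ← mul_ite_zero, ← mul_sum]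
      rw [ih (s \ C) (sdiff_ssubset hCs ⟨a, haC⟩), prod_leOneIndicator_avoid ρ hB hCB]
    _ = (∏ D ∈ ρ.parts.erase B, leOneIndicator #D) *
          ∑ C ∈ B.powerset with a ∈ C, blockWeight #C * leOneIndicator #(B \ C) := by
      rw [mul_sum]
      exact sum_congr rfl fun C _ => by ring
    _ = ∏ B ∈ ρ.parts, leOneIndicator #B := by
      rw [sum_blockWeight_mul_leOneIndicator (ρ.mem_part ha), prod_erase_mul _ _ hB]

lemma prod_leOneIndicator_eq_ite (ρ : Finpartition s) :
    ∏ B ∈ ρ.parts, leOneIndicator #B = if ρ = ⊥ then 1 else 0 := by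
  split_ifs with hρ
  · subst hρ
    refine prod_eq_one fun B hB => ?_
    obtain ⟨x, -, rfl⟩ := Finpartition.mem_bot_iff.1 hB
    simp [leOneIndicator]
  · obtain ⟨B, hB, hcard⟩ : ∃ B ∈ ρ.parts, 1 < #B := by
      by_contra! h
      exact hρ (ρ.eq_bot_of_forall_card_le_one h)
    exact prod_eq_zero hB (if_neg hcard.not_ge)

lemma partitionWeight_eq (τ : Finpartition s) :
    partitionWeight τ = (-1) ^ (#s - #τ.parts) * ∏ B ∈ τ.parts, ((#B - 1)! : ℤ) := by
  have hexp : ∑ B ∈ τ.parts, (#B - 1) = #s - #τ.parts := by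
    rw [sum_tsub_distrib _ fun B hB => (τ.nonempty_of_mem_parts hB).card_pos, τ.sum_card_parts,
      card_eq_sum_ones τ.parts]
  rw [partitionWeight, ← hexp, ← prod_pow_eq_pow_sum, ← prod_mul_distrib]
  rfl

end Weight

/-- In the lattice `Πₙ` of set partitions of `[n]` ordered by refinement (with bottom
element the partition into singletons), the Möbius function `μ(⊥, ·)` — characterized by
`μ(⊥,⊥) = 1` and `∑_{⊥ ≤ τ ≤ ρ} μ(⊥,τ) = 0` for `ρ > ⊥` — is given by
`μ(⊥, π) = (−1)^{n−k} ∏_{i=1}^{k} (#B_i − 1)!` for `π = {B₁,…,B_k}`. -/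
theorem stmt7 (n : ℕ)
    (μ : Finpartition (Finset.univ : Finset (Fin n)) → ℤ)
    (hbot : μ ⊥ = 1)
    (hrec : ∀ ρ : Finpartition (Finset.univ : Finset (Fin n)), ⊥ < ρ →
      ∑ τ : Finpartition (Finset.univ : Finset (Fin n)), (if τ ≤ ρ then μ τ else 0) = 0) :
    ∀ π : Finpartition (Finset.univ : Finset (Fin n)),
      μ π = (-1) ^ (n - π.parts.card) *
        ∏ B ∈ π.parts, (Nat.factorial (B.card - 1) : ℤ) := by
  have hμ (ρ : Finpartition (univ : Finset (Fin n))) :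
      ∑ τ, (if τ ≤ ρ then μ τ else 0) = if ρ = ⊥ then 1 else 0 := by
    rcases eq_or_ne ρ ⊥ with rfl | hρ
    · simp [hbot]
    · rw [if_neg hρ, hrec ρ (bot_lt_iff_ne_bot.2 hρ)]
  have hμ_eq : μ = partitionWeight := eq_of_forall_sum_le_eq fun ρ => by
    rw [hμ, sum_le_partitionWeight, prod_leOneIndicator_eq_ite]
  intro π
  rw [hμ_eq, partitionWeight_eq, card_univ, Fintype.card_fin]
end

section
/- Let P be a finite poset on [n] and π a set partition of [n]. The following are equivalent: (1) every block of π is an antichain of P and the quotient preposet P/π is antisymmetric (a poset); (2) there exists a point x ∈ ℝⁿ with x_i = x_j whenever i, j lie in a common block of π, and x_i < x_j whenever i <_P j. -/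
/-- The quotient preposet relation `P/π` on the blocks: the transitive closure of the
relation `B ≤ C` whenever some `p ∈ B`, `q ∈ C` satisfy `p ≤_P q`. -/
def QRel {α : Type*} (P : PartialOrder α) (parts : Finset (Finset α)) :
    Finset α → Finset α → Prop :=
  Relation.TransGen fun B C => B ∈ parts ∧ C ∈ parts ∧ ∃ p ∈ B, ∃ q ∈ C, P.le p q

/-- A collection of blocks is `P`-transverse if every block is an antichain of `P` and the
quotient preposet `P/π` is antisymmetric (i.e. a poset). -/
def PTransverseParts {α : Type*} (P : PartialOrder α) (parts : Finset (Finset α)) : Prop :=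
  (∀ B ∈ parts, ∀ i ∈ B, ∀ j ∈ B, P.le i j → i = j) ∧
  ∀ B C : Finset α, QRel P parts B C → QRel P parts C B → B = C

/-!
If `P/π` is a poset, send each `i` to the number of blocks strictly below its
block in `P/π`; this is constant on blocks and strictly increasing along `P` because blocks are
antichains. Conversely, given such a point `x`, every generating step `B → C` of `P/π` has
`B = C` or `x` strictly larger on `C` than on `B`, so a cycle `B → C → B` forces `B = C`; and a
relation `i <_P j` inside one block would give `x i < x i`.
-/

open Finset

theorem Relation.TransGen.antisymm_of_step_eq_or_lt {β γ : Type*} [Preorder γ]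
    {r : β → β → Prop} (f : β → γ) (hstep : ∀ a b, r a b → a = b ∨ f a < f b) {a b : β}
    (hab : Relation.TransGen r a b) (hba : Relation.TransGen r b a) : a = b := by
  let s : β → β → Prop := fun a b => a = b ∨ f a < f b
  have : IsTrans β s := ⟨by
    rintro a b c (rfl | hab) (rfl | hbc)
    exacts [Or.inl rfl, Or.inr hbc, Or.inr hab, Or.inr (hab.trans hbc)]⟩
  rcases Relation.transGen_minimal (r' := s) hstep _ _ hab with h | h
  · exact h
  · rcases Relation.transGen_minimal (r' := s) hstep _ _ hba with h' | h'
    exacts [h'.symm, absurd (h.trans h') (lt_irrefl _)]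

theorem Finset.card_filter_strictPred_lt {β : Type*} (s : Finset β) {r : β → β → Prop}
    [DecidableRel r] [IsTrans β r] {a b : β} (ha : a ∈ s) (hab : r a b)
    (hba : ¬ r b a) :
    #{c ∈ s | r c a ∧ ¬ r a c} < #{c ∈ s | r c b ∧ ¬ r b c} := by
  refine Finset.card_lt_card ((Finset.ssubset_iff_of_subset ?_).2 ⟨a, ?_, ?_⟩)
  · intro c
    simp only [mem_filter]
    rintro ⟨hc, hca, hac⟩
    exact ⟨hc, _root_.trans hca hab, fun hbc => hba (_root_.trans hbc hca)⟩
  · simpa only [mem_filter] using ⟨ha, hab, hba⟩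
  · simp only [mem_filter, not_and, not_not]
    exact fun _ h => h

section Transverse

variable {α : Type*} [DecidableEq α] {s : Finset α} {P : PartialOrder α} (π : Finpartition s)

theorem PTransverseParts.exists_nat_point (hπ : PTransverseParts P π.parts) :
    ∃ x : α → ℕ,
      (∀ i j : α, (∃ B ∈ π.parts, i ∈ B ∧ j ∈ B) → x i = x j) ∧
      (∀ i ∈ s, ∀ j ∈ s, P.lt i j → x i < x j) := by
  classical
  obtain ⟨hanti, hantisymm⟩ := hπ
  refine ⟨fun i => #{C ∈ π.parts | QRel P π.parts C (π.part i) ∧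
      ¬ QRel P π.parts (π.part i) C}, ?_, ?_⟩
  · rintro i j ⟨B, hB, hi, hj⟩
    simp only [π.part_eq_of_mem hB hi, π.part_eq_of_mem hB hj]
  · intro i hi j hj hij
    have hiB := π.part_mem.2 hi
    have hQ : QRel P π.parts (π.part i) (π.part j) :=
      .single ⟨hiB, π.part_mem.2 hj, i, π.mem_part hi, j, π.mem_part hj, hij.le⟩
    have : IsTrans _ (QRel P π.parts) := ⟨fun _ _ _ => .trans⟩
    refine Finset.card_filter_strictPred_lt _ hiB hQ fun hQ' => ?_
    have hpart := hantisymm _ _ hQ hQ'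
    exact hij.ne (hanti _ hiB i (π.mem_part hi) j (hpart ▸ π.mem_part hj) hij.le)

theorem ptransverseParts_of_exists_point {γ : Type*} [Preorder γ] (x : α → γ)
    (hconst : ∀ i j : α, (∃ B ∈ π.parts, i ∈ B ∧ j ∈ B) → x i = x j)
    (hmono : ∀ i j : α, P.lt i j → x i < x j) : PTransverseParts P π.parts := by
  have hlt_of_ne : ∀ {i j : α}, P.le i j → i ≠ j → x i < x j := fun hle hne =>
    hmono _ _ ((P.lt_iff_le_not_ge _ _).2 ⟨hle, fun hge => hne (P.le_antisymm _ _ hle hge)⟩)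
  refine ⟨fun B hB i hi j hj hle => ?_, fun B C => ?_⟩
  · by_contra hne
    exact (hlt_of_ne hle hne).ne (hconst i j ⟨B, hB, hi, hj⟩)
  · intro hBC hCB
    obtain ⟨_, ⟨hB, -⟩, -⟩ := Relation.TransGen.head'_iff.1 hBC
    obtain ⟨p, -⟩ := π.nonempty_of_mem_parts hB
    -- the common value of `x` on a block; `p` only serves as a fallback for empty `D`
    let f : Finset α → γ := fun D => x (if h : D.Nonempty then h.choose else p)
    have hf : ∀ D ∈ π.parts, ∀ q ∈ D, f D = x q := fun D hD q hq => by
      have hD' : D.Nonempty := ⟨q, hq⟩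
      simp only [f, dif_pos hD']
      exact hconst _ _ ⟨D, hD, hD'.choose_spec, hq⟩
    refine Relation.TransGen.antisymm_of_step_eq_or_lt f ?_ hBC hCB
    rintro D E ⟨hD, hE, q, hq, r, hr, hqr⟩
    by_cases hqr' : q = r
    · exact Or.inl (π.eq_of_mem_parts hD hE hq (hqr' ▸ hr))
    · exact Or.inr (by rw [hf D hD q hq, hf E hE r hr]; exact hlt_of_ne hqr hqr')

end Transverse

/-- A set partition `π` of `[n]` is `P`-transverse iff there is a point `x ∈ ℝⁿ` constant on
the blocks of `π` with `x_i < x_j` whenever `i <_P j`. -/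
theorem stmt9 (n : ℕ) (P : PartialOrder (Fin n))
    (π : Finpartition (Finset.univ : Finset (Fin n))) :
    PTransverseParts P π.parts ↔
    ∃ x : Fin n → ℝ,
      (∀ i j : Fin n, (∃ B ∈ π.parts, i ∈ B ∧ j ∈ B) → x i = x j) ∧
      (∀ i j : Fin n, P.lt i j → x i < x j) := by
  constructor
  · intro hπ
    obtain ⟨x, hconst, hmono⟩ := hπ.exists_nat_point π
    exact ⟨fun i => x i, fun i j hij => congrArg _ (hconst i j hij),
      fun i j hij => Nat.cast_lt.2 (hmono i (mem_univ i) j (mem_univ j) hij)⟩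
  · rintro ⟨x, hconst, hmono⟩
    exact ptransverseParts_of_exists_point π x hconst hmono
end

section
/- Let P be a finite poset on [n] and π a set partition of [n]. Then π is P-transverse if and only if π contains a block B such that (a) B is a subset of the minimal elements of P, and (b) the partition π \ {B} of [n] \ B is P̂-transverse, where P̂ is the restriction of P to [n] \ B. -/
/-!
If `π` is transverse, the quotient `P/π` is a finite poset, so it has a minimal block `B`; an
element below some `i ∈ B` lies in a block below `B`, hence in `B` itself, and then equals `i`
because `B` is an antichain. Conversely, if `B` consists of minimal elements, no other block
lies below `B` in `P/π`, so a chain of `P/π` that starts outside `B` never enters `B`: the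
quotient relations of `π` and of `π \ {B}` agree away from `B`, and antisymmetry transfers.
-/

variable {α : Type*} {P : PartialOrder α} {parts parts' : Finset (Finset α)} {B C D : Finset α}

namespace QRel

lemma mono (h : parts ⊆ parts') (hq : QRel P parts B C) : QRel P parts' B C :=
  Relation.TransGen.mono (fun _ _ ⟨hB, hC, hle⟩ => ⟨h hB, h hC, hle⟩) _ _ hq

lemma mem_left (hq : QRel P parts B C) : B ∈ parts := by
  induction hq with
  | single h => exact h.1
  | tail _ _ ih => exact ih

section Finpartition

variable [DecidableEq α] {s : Finset α} {π : Finpartition s}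

lemma eq_of_forall_minimal_right (hB : B ∈ π.parts) (hmin : ∀ i ∈ B, ∀ j ∈ s, P.le j i → j = i)
    (hq : QRel P π.parts C B) : C = B := by
  have step : ∀ {X}, X ∈ π.parts ∧ B ∈ π.parts ∧ (∃ p ∈ X, ∃ q ∈ B, P.le p q) → X = B := by
    rintro X ⟨hX, -, p, hp, q, hqB, hle⟩
    obtain rfl : p = q := hmin q hqB p (π.le hX hp) hle
    exact π.eq_of_mem_parts hX hB hp hqB
  induction hq using Relation.TransGen.head_induction_on with
  | single h => exact step h
  | head h _ ih => exact step (ih ▸ h)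

lemma erase_of_forall_minimal (hB : B ∈ π.parts) (hmin : ∀ i ∈ B, ∀ j ∈ s, P.le j i → j = i)
    (hCB : C ≠ B) (hq : QRel P π.parts C D) : QRel P (π.parts.erase B) C D := by
  have hne : ∀ {E}, QRel P π.parts C E → E ≠ B := fun hCE hEB =>
    hCB (eq_of_forall_minimal_right hB hmin (hEB ▸ hCE))
  induction hq with
  | single h =>
    exact .single ⟨Finset.mem_erase.2 ⟨hCB, h.1⟩,
      Finset.mem_erase.2 ⟨hne (.single h), h.2.1⟩, h.2.2⟩
  | tail hCE h ih =>
    exact ih.tail ⟨Finset.mem_erase.2 ⟨hne hCE, h.1⟩,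
      Finset.mem_erase.2 ⟨hne (hCE.tail h), h.2.1⟩, h.2.2⟩

end Finpartition

end QRel

namespace PTransverseParts

lemma subset (h : parts' ⊆ parts) (ht : PTransverseParts P parts) : PTransverseParts P parts' :=
  ⟨fun B hB => ht.1 B (h hB), fun B C h₁ h₂ => ht.2 B C (h₁.mono h) (h₂.mono h)⟩

lemma exists_qRel_minimal (ht : PTransverseParts P parts) (hne : parts.Nonempty) :
    ∃ B ∈ parts, ∀ C, QRel P parts C B → C = B := by
  let r : Finset α → Finset α → Prop := fun C D => QRel P parts C D ∧ C ≠ D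
  have : IsStrictOrder (Finset α) r :=
    { irrefl := fun _ h => h.2 rfl
      trans := fun C D E ⟨hCD, hCD'⟩ ⟨hDE, _⟩ =>
        ⟨hCD.trans hDE, fun hCE => hCD' (ht.2 C D hCD (hCE ▸ hDE))⟩ }
  obtain ⟨B, hB, hmin⟩ := (Set.wellFoundedOn_iff.1 (parts.wellFoundedOn (r := r))).has_min _ hne
  exact ⟨B, hB, fun C hC => by_contra fun hCB => hmin C hC.mem_left ⟨⟨hC, hCB⟩, hC.mem_left, hB⟩⟩

section Finpartition

variable [DecidableEq α] {s : Finset α} {π : Finpartition s}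

lemma forall_minimal_of_qRel_minimal (ht : PTransverseParts P π.parts) (hB : B ∈ π.parts)
    (hBmin : ∀ C, QRel P π.parts C B → C = B) : ∀ i ∈ B, ∀ j ∈ s, P.le j i → j = i := by
  intro i hi j hj hle
  obtain ⟨C, hC, hjC⟩ := π.exists_mem hj
  obtain rfl : C = B := hBmin C (.single ⟨hC, hB, j, hjC, i, hi, hle⟩)
  exact ht.1 C hB j hjC i hi hle

lemma of_erase_of_forall_minimal (hB : B ∈ π.parts) (hmin : ∀ i ∈ B, ∀ j ∈ s, P.le j i → j = i)
    (ht : PTransverseParts P (π.parts.erase B)) : PTransverseParts P π.parts := by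
  refine ⟨fun C hC i hi j hj hle => ?_, fun C D hCD hDC => ?_⟩
  · by_cases hCB : C = B
    · subst hCB
      exact hmin j hj i (π.le hC hi) hle
    · exact ht.1 C (Finset.mem_erase.2 ⟨hCB, hC⟩) i hi j hj hle
  · by_cases hCB : C = B
    · subst hCB
      exact (QRel.eq_of_forall_minimal_right hB hmin hDC).symm
    · have hDB : D ≠ B := fun hDB => hCB (QRel.eq_of_forall_minimal_right hB hmin (hDB ▸ hCD))
      exact ht.2 C D (QRel.erase_of_forall_minimal hB hmin hCB hCD)
        (QRel.erase_of_forall_minimal hB hmin hDB hDC)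

end Finpartition

end PTransverseParts

/-- Recursive characterization: `π` is `P`-transverse iff it contains a block `B` consisting
of minimal elements of `P` such that `π \ {B}` (a partition of `[n] \ B`) is transverse for
the restriction of `P` to `[n] \ B` (equivalently, for `P`, since the blocks of
`π \ {B}` only involve elements outside `B`). -/
theorem stmt10 (n : ℕ) (hn : 0 < n) (P : PartialOrder (Fin n))
    (π : Finpartition (Finset.univ : Finset (Fin n))) :
    PTransverseParts P π.parts ↔
    ∃ B ∈ π.parts,
      (∀ i ∈ B, ∀ j : Fin n, P.le j i → j = i) ∧
      PTransverseParts P (π.parts.erase B) := by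
  constructor
  · intro ht
    have : Nonempty (Fin n) := ⟨⟨0, hn⟩⟩
    obtain ⟨B, hB, hBmin⟩ := ht.exists_qRel_minimal (π.parts_nonempty Finset.univ_nonempty.ne_empty)
    have hmin := ht.forall_minimal_of_qRel_minimal hB hBmin
    exact ⟨B, hB, fun i hi j => hmin i hi j (Finset.mem_univ j),
      ht.subset (Finset.erase_subset B π.parts)⟩
  · rintro ⟨B, hB, hmin, ht⟩
    exact ht.of_erase_of_forall_minimal hB fun i hi j _ => hmin i hi j
end

section
/- For any finite poset P on [n], the number of linear extensions of P equals the number of P-transverse permutations, i.e., permutations σ ∈ Sₙ whose cycle partition is a P-transverse partition. -/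
open scoped Classical

/-- The partition of `Fin n` into the cycles (orbits) of a permutation. -/
def cycleBlocks {n : ℕ} (σ : Equiv.Perm (Fin n)) : Finset (Finset (Fin n)) :=
  Finset.univ.image fun i => Finset.univ.filter fun j => σ.SameCycle i j

/-!
Both sides satisfy `f S = ∑ m ∈ maximals P S, f (S.erase m)` and `f ∅ = 1`, where `S` ranges
over subsets of the ground set and `P` is restricted to `S`.

For linear extensions this is "the last element is maximal". For transverse permutations
`σ'` of `S.erase m`, with `m` maximal in `S`, the element `m` can be attached to a block `B` of
the cycle partition that is a sink of the quotient poset and has no element below `m` (or form a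
new singleton block, `B = ∅`): the result is still transverse, `insert m B` is a sink, and the
union of all sink blocks becomes `m` together with the union of the attachable blocks.
Attaching `m` right after the largest element `u` of that union (with respect to a fixed
auxiliary total order; `u = m` means a new fixed point) gives `σ' * swap u m`. The same
largest element `v` can be read off from `σ`, so `m = σ v` and `σ' = σ * swap v m`, and the
insertion is a bijection.
-/

namespace Equiv.Perm

variable {α β : Type*}

theorem SameCycle.map_of_forall {σ : Perm α} {τ : Perm β} {c : α → β}
    (h : ∀ z, τ.SameCycle (c z) (c (σ z))) {x y : α} (hxy : σ.SameCycle x y) :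
    τ.SameCycle (c x) (c y) := by
  obtain ⟨i, rfl⟩ := hxy
  induction i using Int.induction_on with
  | zero => exact SameCycle.refl _ _
  | succ i ih =>
    rw [add_comm, zpow_one_add, mul_apply]
    exact ih.trans (h _)
  | pred i ih =>
    have hstep := h ((σ ^ (-(i : ℤ) - 1)) x)
    rw [← mul_apply, ← zpow_one_add, add_sub_cancel] at hstep
    exact ih.trans hstep.symm

variable [DecidableEq α] {σ : Perm α} {u m x y : α}

theorem sameCycle_mul_swap_left (hm : σ m = m) : (σ * swap u m).SameCycle u m :=
  ⟨1, by simp [hm]⟩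

theorem SameCycle.mul_swap (hm : σ m = m) (h : σ.SameCycle x y) :
    (σ * swap u m).SameCycle x y := by
  refine SameCycle.map_of_forall (c := id) (fun z => ?_) h
  have hz : (σ * swap u m).SameCycle z (swap u m z) := by
    rcases eq_or_ne z u with rfl | hzu
    · simpa using sameCycle_mul_swap_left hm
    rcases eq_or_ne z m with rfl | hzm
    · simpa using (sameCycle_mul_swap_left hm).symm
    · rw [swap_apply_of_ne_of_ne hzu hzm]
  have hσz : σ z = (σ * swap u m) (swap u m z) := by rw [mul_apply, swap_apply_self]
  exact hσz ▸ hz.apply_right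

theorem SameCycle.of_mul_swap (hm : σ m = m) (hx : x ≠ m) (hy : y ≠ m)
    (h : (σ * swap u m).SameCycle x y) : σ.SameCycle x y := by
  -- collapse `m` onto `u`, its predecessor in the cycle of `σ * swap u m`
  have key := SameCycle.map_of_forall (c := fun z => if z = m then u else z) (τ := σ)
    (fun z => ?_) h
  · simpa [hx, hy] using key
  rcases eq_or_ne z m with rfl | hzm
  · rw [mul_apply, swap_apply_right, if_pos (Eq.refl z)]
    split_ifs
    exacts [SameCycle.refl _ _, ⟨1, by simp⟩]
  rcases eq_or_ne z u with rfl | hzu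
  · simpa [hzm, hm] using SameCycle.refl σ z
  · have hσz : σ z ≠ m := fun h => hzm (σ.injective (h.trans hm.symm))
    rw [mul_apply, swap_apply_of_ne_of_ne hzu hzm, if_neg hzm, if_neg hσz]
    exact ⟨1, by simp⟩

theorem sameCycle_mul_swap_iff (hm : σ m = m) (hx : x ≠ m) (hy : y ≠ m) :
    (σ * swap u m).SameCycle x y ↔ σ.SameCycle x y :=
  ⟨SameCycle.of_mul_swap hm hx hy, SameCycle.mul_swap hm⟩

theorem sameCycle_mul_swap_iff_of_left (hm : σ m = m) (hy : y ≠ m) :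
    (σ * swap u m).SameCycle m y ↔ σ.SameCycle u y := by
  rcases eq_or_ne u m with rfl | hum
  · rw [swap_self, ← one_def, mul_one]
  rw [← sameCycle_mul_swap_iff hm hum hy]
  exact ⟨(sameCycle_mul_swap_left hm).trans, (sameCycle_mul_swap_left hm).symm.trans⟩

end Equiv.Perm

noncomputable section

namespace PTransverse

open Finset Equiv Equiv.Perm Relation

variable {α : Type*}

section Quotient

variable (P : PartialOrder α)

def Linked (B C : Finset α) : Prop := ∃ p ∈ B, ∃ q ∈ C, P.le p q

def IsSink (parts : Finset (Finset α)) (B : Finset α) : Prop :=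
  ∀ C ∈ parts, Linked P B C → C = B

def QuotAntisymm (parts : Finset (Finset α)) : Prop :=
  ∀ B C : Finset α, QRel P parts B C → QRel P parts C B → B = C

def sinks (parts : Finset (Finset α)) : Finset (Finset α) :=
  parts.filter (IsSink P parts)

def maximals (S : Finset α) : Finset α :=
  S.filter fun m => ∀ x ∈ S, P.le m x → x = m

variable {P} {parts parts' : Finset (Finset α)} {A B C X Y : Finset α}

theorem mem_maximals {S : Finset α} {m : α} :
    m ∈ maximals P S ↔ m ∈ S ∧ ∀ x ∈ S, P.le m x → x = m :=
  mem_filter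

theorem Linked.mono {B' C' : Finset α} (hB : B ⊆ B') (hC : C ⊆ C') (h : Linked P B C) :
    Linked P B' C' :=
  let ⟨p, hp, q, hq, hpq⟩ := h
  ⟨p, hB hp, q, hC hq, hpq⟩

theorem qrel_single (hB : B ∈ parts) (hC : C ∈ parts) (h : Linked P B C) :
    QRel P parts B C :=
  TransGen.single ⟨hB, hC, h⟩

theorem QRel.mem (h : QRel P parts B C) : B ∈ parts ∧ C ∈ parts := by
  induction h with
  | single h => exact ⟨h.1, h.2.1⟩
  | tail _ h ih => exact ⟨ih.1, h.2.1⟩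

theorem QRel.mono (hsub : parts ⊆ parts') (h : QRel P parts B C) : QRel P parts' B C :=
  TransGen.mono (fun _ _ e => ⟨hsub e.1, hsub e.2.1, e.2.2⟩) _ _ h

theorem QuotAntisymm.mono (hsub : parts ⊆ parts') (h : QuotAntisymm P parts') :
    QuotAntisymm P parts :=
  fun B C hBC hCB => h B C (QRel.mono hsub hBC) (QRel.mono hsub hCB)

theorem IsSink.eq_of_qrel (hA : IsSink P parts A) (h : QRel P parts A C) : C = A := by
  induction h with
  | single h => exact hA _ h.2.1 h.2.2
  | tail _ h ih => subst ih; exact hA _ h.2.1 h.2.2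

theorem QuotAntisymm.exists_isSink (h : QuotAntisymm P parts) (hne : parts.Nonempty) :
    ∃ B ∈ parts, IsSink P parts B := by
  obtain ⟨B, hB, hmin⟩ :=
    parts.exists_min_image (fun X => (parts.filter (QRel P parts X)).card) hne
  refine ⟨B, hB, fun C hC hBC => by_contra fun hCB => ?_⟩
  have hBC' : QRel P parts B C := qrel_single hB hC hBC
  have hBB : QRel P parts B B :=
    let ⟨p, hp, _⟩ := hBC
    qrel_single hB hB ⟨p, hp, p, hp, P.le_refl p⟩
  -- whatever `C` reaches, `B` reaches; `B` reaches itself but `C` does not reach `B`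
  have hlt : parts.filter (QRel P parts C) ⊂ parts.filter (QRel P parts B) :=
    (ssubset_iff_of_subset fun X hX => mem_filter.2 ⟨(mem_filter.1 hX).1,
      hBC'.trans (mem_filter.1 hX).2⟩).2
      ⟨B, mem_filter.2 ⟨hB, hBB⟩, fun hX => hCB (h _ _ (mem_filter.1 hX).2 hBC')⟩
  exact (card_lt_card hlt).not_ge (hmin C hC)

variable [DecidableEq α]

theorem IsSink.qrel_erase (hA : IsSink P parts A) (h : QRel P parts X Y) (hY : Y ≠ A) :
    QRel P (parts.erase A) X Y := by
  induction h with
  | single h =>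
    have hX : X ≠ A := by rintro rfl; exact hY (hA _ h.2.1 h.2.2)
    exact qrel_single (mem_erase.2 ⟨hX, h.1⟩) (mem_erase.2 ⟨hY, h.2.1⟩) h.2.2
  | @tail Z Y _ h ih =>
    have hZ : Z ≠ A := by rintro rfl; exact hY (hA _ h.2.1 h.2.2)
    exact (ih hZ).tail ⟨mem_erase.2 ⟨hZ, h.1⟩, mem_erase.2 ⟨hY, h.2.1⟩, h.2.2⟩

theorem IsSink.quotAntisymm (hA : IsSink P parts A) (h : QuotAntisymm P (parts.erase A)) :
    QuotAntisymm P parts := by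
  intro B C hBC hCB
  by_cases hB : B = A
  · subst hB; exact (hA.eq_of_qrel hBC).symm
  by_cases hC : C = A
  · subst hC; exact hA.eq_of_qrel hCB
  exact h B C (hA.qrel_erase hBC hC) (hA.qrel_erase hCB hB)

end Quotient

section AddToBlock

variable [DecidableEq α] (P : PartialOrder α)

/-- `∅` stands for starting the new singleton block `{m}`. -/
def attachableBlocks (parts : Finset (Finset α)) (m : α) : Finset (Finset α) :=
  insert ∅ (parts.filter fun C => IsSink P parts C ∧ ∀ q ∈ C, ¬ P.le q m)

def addToBlock (parts : Finset (Finset α)) (m : α) (B : Finset α) : Finset (Finset α) :=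
  insert (insert m B) (parts.erase B)

variable {P} {S : Finset α} {parts : Finset (Finset α)} {m : α} {B C : Finset α}

theorem mem_attachableBlocks :
    B ∈ attachableBlocks P parts m ↔
      B = ∅ ∨ B ∈ parts ∧ IsSink P parts B ∧ ∀ q ∈ B, ¬ P.le q m := by
  simp only [attachableBlocks, mem_insert, mem_filter]

theorem mem_addToBlock :
    C ∈ addToBlock parts m B ↔ C = insert m B ∨ C ≠ B ∧ C ∈ parts := by
  simp only [addToBlock, mem_insert, mem_erase]

theorem linked_insert_left_iff (hm : m ∈ maximals P S) (hC : C ⊆ S.erase m) :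
    Linked P (insert m B) C ↔ Linked P B C := by
  refine ⟨fun ⟨p, hp, q, hq, hpq⟩ => ?_, Linked.mono (subset_insert m B) subset_rfl⟩
  rcases mem_insert.1 hp with rfl | hp
  · obtain ⟨hqm, hqS⟩ := mem_erase.1 (hC hq)
    exact absurd ((mem_maximals.1 hm).2 q hqS hpq) hqm
  · exact ⟨p, hp, q, hq, hpq⟩

theorem isSink_of_mem_attachableBlocks (hB : B ∈ attachableBlocks P parts m) :
    IsSink P parts B := by
  rcases mem_attachableBlocks.1 hB with rfl | ⟨-, hB, -⟩
  exacts [fun C _ ⟨_, hp, _⟩ => absurd hp (notMem_empty _), hB]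

theorem isSink_addToBlock (hm : m ∈ maximals P S) (hsub : ∀ C ∈ parts, C ⊆ S.erase m)
    (hB : IsSink P parts B) : IsSink P (addToBlock parts m B) (insert m B) := by
  intro C hC hlink
  rcases mem_addToBlock.1 hC with rfl | ⟨hCB, hC⟩
  · rfl
  · exact absurd (hB C hC ((linked_insert_left_iff hm (hsub C hC)).1 hlink)) hCB

theorem isSink_addToBlock_iff (hsub : ∀ C ∈ parts, C ⊆ S.erase m)
    (hB : B ∈ attachableBlocks P parts m) (hC : C ∈ parts) (hCB : C ≠ B) :
    IsSink P (addToBlock parts m B) C ↔ IsSink P parts C ∧ ∀ q ∈ C, ¬ P.le q m := by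
  have hmC : m ∉ C := fun h => (mem_erase.1 (hsub C hC h)).1 rfl
  have hAC : insert m B ≠ C := fun h => hmC (h ▸ mem_insert_self m B)
  have hA : insert m B ∈ addToBlock parts m B := mem_addToBlock.2 (Or.inl rfl)
  constructor
  · intro hsink
    refine ⟨fun Y hY hlink => by_contra fun hYC => ?_, fun q hq hqm => ?_⟩
    · by_cases hYB : Y = B
      · subst hYB
        exact hAC (hsink _ hA (hlink.mono subset_rfl (subset_insert m Y)))
      · exact hYC (hsink Y (mem_addToBlock.2 (Or.inr ⟨hYB, hY⟩)) hlink)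
    · exact hAC (hsink _ hA ⟨q, hq, m, mem_insert_self m B, hqm⟩)
  · rintro ⟨hsink, hclean⟩ Y hY ⟨p, hp, q, hq, hpq⟩
    rcases mem_addToBlock.1 hY with rfl | ⟨hYB, hY⟩
    · rcases mem_insert.1 hq with rfl | hq
      · exact absurd hpq (hclean p hp)
      rcases mem_attachableBlocks.1 hB with rfl | ⟨hB, -⟩
      · exact absurd hq (notMem_empty q)
      · exact absurd (hsink B hB ⟨p, hp, q, hq, hpq⟩) hCB.symm
    · exact hsink Y hY ⟨p, hp, q, hq, hpq⟩

theorem biUnion_sinks_addToBlock (hm : m ∈ maximals P S) (hsub : ∀ C ∈ parts, C ⊆ S.erase m)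
    (hB : B ∈ attachableBlocks P parts m) :
    (sinks P (addToBlock parts m B)).biUnion id =
      insert m ((attachableBlocks P parts m).biUnion id) := by
  have hA := isSink_addToBlock hm hsub (isSink_of_mem_attachableBlocks hB)
  ext y
  simp only [mem_biUnion, mem_insert, id, sinks, mem_filter]
  constructor
  · rintro ⟨X, ⟨hX, hXsink⟩, hy⟩
    rcases mem_addToBlock.1 hX with rfl | ⟨hXB, hX⟩
    · exact (mem_insert.1 hy).imp_right fun hy => ⟨B, hB, hy⟩
    · refine Or.inr ⟨X, mem_attachableBlocks.2 (Or.inr ⟨hX, ?_⟩), hy⟩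
      exact (isSink_addToBlock_iff hsub hB hX hXB).1 hXsink
  · rintro (rfl | ⟨C, hC, hy⟩)
    · exact ⟨_, ⟨mem_addToBlock.2 (Or.inl rfl), hA⟩, mem_insert_self _ _⟩
    rcases mem_attachableBlocks.1 hC with rfl | ⟨hC, hCsink⟩
    · exact absurd hy (notMem_empty y)
    by_cases hCB : C = B
    · subst hCB
      exact ⟨_, ⟨mem_addToBlock.2 (Or.inl rfl), hA⟩, mem_insert_of_mem hy⟩
    · exact ⟨C, ⟨mem_addToBlock.2 (Or.inr ⟨hCB, hC⟩),
        (isSink_addToBlock_iff hsub hB hC hCB).2 hCsink⟩, hy⟩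

theorem transverse_addToBlock (hm : m ∈ maximals P S) (hsub : ∀ C ∈ parts, C ⊆ S.erase m)
    (hB : B ∈ attachableBlocks P parts m) (hT : PTransverseParts P parts) :
    PTransverseParts P (addToBlock parts m B) := by
  have hBsink := isSink_of_mem_attachableBlocks hB
  obtain ⟨hBsub, hBanti, hBclean⟩ : B ⊆ S.erase m ∧
      (∀ i ∈ B, ∀ j ∈ B, P.le i j → i = j) ∧ ∀ q ∈ B, ¬ P.le q m := by
    rcases mem_attachableBlocks.1 hB with rfl | ⟨hB, -, hclean⟩
    · simp
    · exact ⟨hsub B hB, hT.1 B hB, hclean⟩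
  refine ⟨fun X hX i hi j hj hij => ?_, ?_⟩
  · rcases mem_addToBlock.1 hX with rfl | ⟨-, hX⟩
    · rcases mem_insert.1 hi with rfl | hi <;> rcases mem_insert.1 hj with hjm | hj
      · exact hjm.symm
      · obtain ⟨hjm, hjS⟩ := mem_erase.1 (hBsub hj)
        exact absurd ((mem_maximals.1 hm).2 j hjS hij) hjm
      · exact absurd (hjm ▸ hij) (hBclean i hi)
      · exact hBanti i hi j hj hij
    · exact hT.1 X hX i hi j hj hij
  · refine (isSink_addToBlock hm hsub hBsink).quotAntisymm ?_
    exact QuotAntisymm.mono ((erase_insert_subset _ _).trans (erase_subset _ _)) hT.2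

theorem transverse_of_addToBlock (hsub : ∀ C ∈ parts, C ⊆ S.erase m)
    (hB : B = ∅ ∨ B ∈ parts) (hT : PTransverseParts P (addToBlock parts m B))
    (hA : IsSink P (addToBlock parts m B) (insert m B)) :
    PTransverseParts P parts ∧ B ∈ attachableBlocks P parts m := by
  have hmC : ∀ C ∈ parts, m ∉ C := fun C hC h => (mem_erase.1 (hsub C hC h)).1 rfl
  have hAnew : insert m B ∈ addToBlock parts m B := mem_addToBlock.2 (Or.inl rfl)
  have hBsink : IsSink P parts B := fun Y hY hlink => by_contra fun hYB =>
    hmC Y hY (hA Y (mem_addToBlock.2 (Or.inr ⟨hYB, hY⟩))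
      (hlink.mono (subset_insert m B) subset_rfl) ▸ mem_insert_self m B)
  have hanti : ∀ C ∈ parts, ∀ i ∈ C, ∀ j ∈ C, P.le i j → i = j := by
    intro C hC i hi j hj hij
    by_cases hCB : C = B
    · subst hCB
      exact hT.1 _ hAnew i (mem_insert_of_mem hi) j (mem_insert_of_mem hj) hij
    · exact hT.1 C (mem_addToBlock.2 (Or.inr ⟨hCB, hC⟩)) i hi j hj hij
  refine ⟨⟨hanti, hBsink.quotAntisymm (QuotAntisymm.mono (subset_insert _ _) hT.2)⟩, ?_⟩
  rcases hB with rfl | hB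
  · exact mem_insert_self _ _
  refine mem_attachableBlocks.2 (Or.inr ⟨hB, hBsink, fun q hq hqm => hmC B hB ?_⟩)
  have hqm : q = m :=
    hT.1 _ hAnew q (mem_insert_of_mem hq) m (mem_insert_self m B) hqm
  exact hqm ▸ hq

end AddToBlock

section Cycles

variable {S : Finset α} {σ : Perm α} {m u v x y : α} {B : Finset α}

def cycleBlock (S : Finset α) (σ : Perm α) (x : α) : Finset α :=
  S.filter (σ.SameCycle x)

theorem mem_cycleBlock : y ∈ cycleBlock S σ x ↔ y ∈ S ∧ σ.SameCycle x y :=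
  mem_filter

theorem cycleBlock_subset : cycleBlock S σ x ⊆ S :=
  filter_subset _ _

theorem mem_cycleBlock_self (hx : x ∈ S) : x ∈ cycleBlock S σ x :=
  mem_cycleBlock.2 ⟨hx, SameCycle.refl σ x⟩

theorem cycleBlock_eq_of_sameCycle (h : σ.SameCycle x y) :
    cycleBlock S σ x = cycleBlock S σ y := by
  ext z
  simp only [mem_cycleBlock]
  exact and_congr_right fun _ => ⟨h.symm.trans, h.trans⟩

theorem cycleBlock_eq_of_mem (hy : y ∈ cycleBlock S σ x) :
    cycleBlock S σ x = cycleBlock S σ y :=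
  cycleBlock_eq_of_sameCycle (mem_cycleBlock.1 hy).2

theorem cycleBlock_apply : cycleBlock S σ (σ x) = cycleBlock S σ x :=
  (cycleBlock_eq_of_sameCycle (SameCycle.refl σ x).apply_right).symm

theorem apply_mem_of_fixes (hfix : ∀ x ∉ S, σ x = x) {x : α} (hx : x ∈ S) : σ x ∈ S := by
  by_contra h
  rw [σ.injective (hfix _ h)] at h
  exact h hx

variable [DecidableEq α]

def cycleBlocksOn (S : Finset α) (σ : Perm α) : Finset (Finset α) :=
  S.image (cycleBlock S σ)

theorem mem_cycleBlocksOn : B ∈ cycleBlocksOn S σ ↔ ∃ x ∈ S, cycleBlock S σ x = B :=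
  mem_image

theorem cycleBlock_mem_cycleBlocksOn (hx : x ∈ S) : cycleBlock S σ x ∈ cycleBlocksOn S σ :=
  mem_image_of_mem _ hx

theorem subset_of_mem_cycleBlocksOn (hB : B ∈ cycleBlocksOn S σ) : B ⊆ S := by
  obtain ⟨x, -, rfl⟩ := mem_cycleBlocksOn.1 hB
  exact cycleBlock_subset

theorem eq_cycleBlock_of_mem (hB : B ∈ cycleBlocksOn S σ) (hx : x ∈ B) :
    B = cycleBlock S σ x := by
  obtain ⟨y, -, rfl⟩ := mem_cycleBlocksOn.1 hB
  exact cycleBlock_eq_of_mem hx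

theorem fixes_mul_swap (hfix : ∀ x ∉ S.erase m, σ x = x) (hu : u ∈ S) (hm : m ∈ S) :
    ∀ x ∉ S, (σ * swap u m) x = x := by
  intro x hx
  rw [mul_apply, swap_apply_of_ne_of_ne (ne_of_mem_of_not_mem hu hx).symm
    (ne_of_mem_of_not_mem hm hx).symm]
  exact hfix x fun h => hx (mem_of_mem_erase h)

theorem fixes_erase_mul_swap (hfix : ∀ x ∉ S, σ x = x) (hv : v ∈ S) :
    ∀ x ∉ S.erase (σ v), (σ * swap v (σ v)) x = x := by
  intro x hx
  rcases eq_or_ne x (σ v) with rfl | hxm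
  · simp [mul_apply]
  have hxS : x ∉ S := fun h => hx (mem_erase.2 ⟨hxm, h⟩)
  rw [mul_apply, swap_apply_of_ne_of_ne (ne_of_mem_of_not_mem hv hxS).symm hxm]
  exact hfix x hxS

theorem cycleBlock_eq_empty_of_fixed (hm : σ m = m) :
    cycleBlock (S.erase m) σ m = ∅ :=
  eq_empty_of_forall_notMem fun y hy => by
    obtain ⟨hy, hmy⟩ := mem_cycleBlock.1 hy
    exact (mem_erase.1 hy).1 (hmy.eq_of_left hm).symm

theorem cycleBlock_mul_swap (hm : σ m = m) (hmS : m ∈ S) :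
    cycleBlock S (σ * swap u m) m = insert m (cycleBlock (S.erase m) σ u) := by
  ext y
  rcases eq_or_ne y m with rfl | hym
  · simp only [mem_insert_self, iff_true]
    exact mem_cycleBlock_self hmS
  simp [mem_cycleBlock, hym, sameCycle_mul_swap_iff_of_left hm hym]

theorem cycleBlocksOn_mul_swap (hm : σ m = m) (hmS : m ∈ S) :
    cycleBlocksOn S (σ * swap u m) =
      addToBlock (cycleBlocksOn (S.erase m) σ) m (cycleBlock (S.erase m) σ u) := by
  have hold : ∀ x ∈ S.erase m, ¬ (σ * swap u m).SameCycle m x →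
      cycleBlock S (σ * swap u m) x = cycleBlock (S.erase m) σ x := by
    intro x hx hmx
    have hxm := (mem_erase.1 hx).1
    ext y
    rcases eq_or_ne y m with rfl | hym
    · simpa [mem_cycleBlock] using fun _ h => hmx h.symm
    · simp [mem_cycleBlock, hym, sameCycle_mul_swap_iff hm hxm hym]
  ext B
  rw [mem_cycleBlocksOn, mem_addToBlock, ← cycleBlock_mul_swap hm hmS]
  constructor
  · rintro ⟨x, hx, rfl⟩
    by_cases hmx : (σ * swap u m).SameCycle m x
    · exact Or.inl (cycleBlock_eq_of_sameCycle hmx).symm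
    have hxm : x ≠ m := by rintro rfl; exact hmx (SameCycle.refl _ _)
    have hx' : x ∈ S.erase m := mem_erase.2 ⟨hxm, hx⟩
    rw [hold x hx' hmx]
    refine Or.inr ⟨fun h => hmx ?_, cycleBlock_mem_cycleBlocksOn hx'⟩
    have hux := (mem_cycleBlock.1 (h ▸ mem_cycleBlock_self hx')).2
    exact (sameCycle_mul_swap_iff_of_left hm hxm).2 hux
  · rintro (rfl | ⟨hB, hBmem⟩)
    · exact ⟨m, hmS, rfl⟩
    obtain ⟨x, hx, rfl⟩ := mem_cycleBlocksOn.1 hBmem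
    have hmx : ¬ (σ * swap u m).SameCycle m x := fun h => hB (cycleBlock_eq_of_sameCycle
      ((sameCycle_mul_swap_iff_of_left hm (mem_erase.1 hx).1).1 h)).symm
    exact ⟨x, mem_of_mem_erase hx, hold x hx hmx⟩

end Cycles

section TransversePerms

variable [DecidableEq α] (P : PartialOrder α)

def IsTransversePerm (S : Finset α) (σ : Perm α) : Prop :=
  (∀ x ∉ S, σ x = x) ∧ PTransverseParts P (cycleBlocksOn S σ)

def sinkElements (S : Finset α) (σ : Perm α) : Finset α :=
  (sinks P (cycleBlocksOn S σ)).biUnion id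

def insertionCandidates (S : Finset α) (m : α) (σ : Perm α) : Finset α :=
  insert m ((attachableBlocks P (cycleBlocksOn S σ) m).biUnion id)

variable {P} {S : Finset α} {σ : Perm α} {m u v : α}

theorem mem_sinkElements : v ∈ sinkElements P S σ ↔
    v ∈ S ∧ IsSink P (cycleBlocksOn S σ) (cycleBlock S σ v) := by
  refine ⟨fun hv => ?_, fun ⟨hvS, hsink⟩ => mem_biUnion.2
    ⟨_, mem_filter.2 ⟨cycleBlock_mem_cycleBlocksOn hvS, hsink⟩, mem_cycleBlock_self hvS⟩⟩
  obtain ⟨A, hA, hvA⟩ := mem_biUnion.1 hv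
  obtain ⟨hAp, hAsink⟩ := mem_filter.1 hA
  exact ⟨subset_of_mem_cycleBlocksOn hAp hvA, eq_cycleBlock_of_mem hAp hvA ▸ hAsink⟩

theorem cycleBlock_mem_attachableBlocks (hσ : IsTransversePerm P (S.erase m) σ)
    (hu : u ∈ insertionCandidates P (S.erase m) m σ) :
    cycleBlock (S.erase m) σ u ∈ attachableBlocks P (cycleBlocksOn (S.erase m) σ) m := by
  rcases mem_insert.1 hu with rfl | hu
  · rw [cycleBlock_eq_empty_of_fixed (hσ.1 u (notMem_erase u S))]
    exact mem_insert_self _ _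
  obtain ⟨C, hC, huC⟩ := mem_biUnion.1 hu
  rcases mem_attachableBlocks.1 hC with rfl | ⟨hCp, -⟩
  · exact absurd huC (notMem_empty u)
  · exact eq_cycleBlock_of_mem hCp huC ▸ hC

theorem mem_of_mem_insertionCandidates (hmS : m ∈ S)
    (hu : u ∈ insertionCandidates P (S.erase m) m σ) : u ∈ S := by
  rcases mem_insert.1 hu with rfl | hu
  · exact hmS
  obtain ⟨C, hC, huC⟩ := mem_biUnion.1 hu
  rcases mem_attachableBlocks.1 hC with rfl | ⟨hCp, -⟩
  · exact absurd huC (notMem_empty u)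
  · exact mem_of_mem_erase (subset_of_mem_cycleBlocksOn hCp huC)

theorem IsTransversePerm.mul_swap_of_mem_insertionCandidates (hm : m ∈ maximals P S)
    (hσ : IsTransversePerm P (S.erase m) σ) (hu : u ∈ insertionCandidates P (S.erase m) m σ) :
    IsTransversePerm P S (σ * swap u m) ∧
      sinkElements P S (σ * swap u m) = insertionCandidates P (S.erase m) m σ := by
  have hmS := (mem_maximals.1 hm).1
  have hB := cycleBlock_mem_attachableBlocks hσ hu
  have hsub : ∀ C ∈ cycleBlocksOn (S.erase m) σ, C ⊆ S.erase m :=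
    fun _ => subset_of_mem_cycleBlocksOn
  rw [IsTransversePerm, sinkElements, cycleBlocksOn_mul_swap (hσ.1 m (notMem_erase m S)) hmS]
  exact ⟨⟨fixes_mul_swap hσ.1 (mem_of_mem_insertionCandidates hmS hu) hmS,
    transverse_addToBlock hm hsub hB hσ.2⟩, biUnion_sinks_addToBlock hm hsub hB⟩

theorem IsTransversePerm.sinkElements_nonempty (hσ : IsTransversePerm P S σ)
    (hS : S.Nonempty) : (sinkElements P S σ).Nonempty := by
  obtain ⟨x, hx⟩ := hS
  obtain ⟨B, hB, hBsink⟩ :=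
    QuotAntisymm.exists_isSink hσ.2.2 ⟨_, cycleBlock_mem_cycleBlocksOn hx⟩
  obtain ⟨y, hy, rfl⟩ := mem_cycleBlocksOn.1 hB
  exact ⟨y, mem_sinkElements.2 ⟨hy, hBsink⟩⟩

theorem IsTransversePerm.apply_mem_maximals (hσ : IsTransversePerm P S σ)
    (hv : v ∈ sinkElements P S σ) : σ v ∈ maximals P S := by
  obtain ⟨hvS, hsink⟩ := mem_sinkElements.1 hv
  have hmS : σ v ∈ S := apply_mem_of_fixes hσ.1 hvS
  have hmA : σ v ∈ cycleBlock S σ v := cycleBlock_apply ▸ mem_cycleBlock_self hmS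
  refine mem_maximals.2 ⟨hmS, fun y hy hmy => ?_⟩
  have hyA : y ∈ cycleBlock S σ v := by
    have hlink : Linked P (cycleBlock S σ v) (cycleBlock S σ y) :=
      ⟨σ v, hmA, y, mem_cycleBlock_self hy, hmy⟩
    rw [← hsink _ (cycleBlock_mem_cycleBlocksOn hy) hlink]
    exact mem_cycleBlock_self hy
  exact (hσ.2.1 _ (cycleBlock_mem_cycleBlocksOn hvS) _ hmA y hyA hmy).symm

theorem IsTransversePerm.mul_swap_of_mem_sinkElements (hσ : IsTransversePerm P S σ)
    (hv : v ∈ sinkElements P S σ) :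
    IsTransversePerm P (S.erase (σ v)) (σ * swap v (σ v)) ∧
      v ∈ insertionCandidates P (S.erase (σ v)) (σ v) (σ * swap v (σ v)) := by
  obtain ⟨hvS, hsink⟩ := mem_sinkElements.1 hv
  have hmS : σ v ∈ S := apply_mem_of_fixes hσ.1 hvS
  have hfix := fixes_erase_mul_swap hσ.1 hvS
  set m := σ v
  set σ' := σ * swap v m
  have hσ' : σ' * swap v m = σ := mul_swap_mul_self v m σ
  have hσ'm : σ' m = m := hfix m (notMem_erase m S)
  have hblocks := cycleBlocksOn_mul_swap (u := v) hσ'm hmS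
  have hA : insert m (cycleBlock (S.erase m) σ' v) = cycleBlock S σ v := by
    rw [← cycleBlock_mul_swap hσ'm hmS, hσ', cycleBlock_apply]
  rw [hσ'] at hblocks
  have hB : cycleBlock (S.erase m) σ' v = ∅ ∨
      cycleBlock (S.erase m) σ' v ∈ cycleBlocksOn (S.erase m) σ' := by
    rcases eq_or_ne v m with hvm | hvm
    · exact Or.inl (by rw [hvm]; exact cycleBlock_eq_empty_of_fixed hσ'm)
    · exact Or.inr (cycleBlock_mem_cycleBlocksOn (mem_erase.2 ⟨hvm, hvS⟩))
  obtain ⟨hT, hBatt⟩ := transverse_of_addToBlock (fun _ => subset_of_mem_cycleBlocksOn) hB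
    (hblocks ▸ hσ.2) (hblocks ▸ hA ▸ hsink)
  refine ⟨⟨hfix, hT⟩, ?_⟩
  rcases eq_or_ne v m with hvm | hvm
  · exact hvm ▸ mem_insert_self _ _
  · exact mem_insert_of_mem
      (mem_biUnion.2 ⟨_, hBatt, mem_cycleBlock_self (mem_erase.2 ⟨hvm, hvS⟩)⟩)

end TransversePerms

section Counting

variable [LinearOrder α] (P : PartialOrder α)

def insertionPoint (S : Finset α) (m : α) (σ : Perm α) : α :=
  (insertionCandidates P S m σ).max' (insert_nonempty _ _)

def insertMaximal (S : Finset α) (m : α) (σ : Perm α) : Perm α :=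
  σ * swap (insertionPoint P (S.erase m) m σ) m

variable {P} {S : Finset α} {m m₁ m₂ : α} {σ σ₁ σ₂ τ : Perm α}

theorem insertionPoint_eq_max' {s : Finset α} (h : insertionCandidates P S m σ = s)
    (hs : s.Nonempty) : insertionPoint P S m σ = s.max' hs := by
  subst h
  rfl

theorem IsTransversePerm.transverse_insertMaximal (hm : m ∈ maximals P S)
    (hσ : IsTransversePerm P (S.erase m) σ) : IsTransversePerm P S (insertMaximal P S m σ) :=
  (hσ.mul_swap_of_mem_insertionCandidates hm (max'_mem _ _)).1

theorem IsTransversePerm.insertionPoint_eq (hm : m ∈ maximals P S)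
    (hσ : IsTransversePerm P (S.erase m) σ) (h : insertMaximal P S m σ = τ)
    (hne : (sinkElements P S τ).Nonempty) :
    insertionPoint P (S.erase m) m σ = (sinkElements P S τ).max' hne := by
  subst h
  exact insertionPoint_eq_max'
    (hσ.mul_swap_of_mem_insertionCandidates hm (max'_mem _ _)).2.symm hne

theorem insertMaximal_inj (hm₁ : m₁ ∈ maximals P S)
    (hσ₁ : IsTransversePerm P (S.erase m₁) σ₁) (hm₂ : m₂ ∈ maximals P S)
    (hσ₂ : IsTransversePerm P (S.erase m₂) σ₂)
    (h : insertMaximal P S m₁ σ₁ = insertMaximal P S m₂ σ₂) :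
    m₁ = m₂ ∧ σ₁ = σ₂ := by
  have hne := (hσ₂.transverse_insertMaximal hm₂).sinkElements_nonempty
    ⟨m₂, (mem_maximals.1 hm₂).1⟩
  have hu := (hσ₁.insertionPoint_eq hm₁ h hne).trans
    (hσ₂.insertionPoint_eq hm₂ rfl hne).symm
  unfold insertMaximal at h
  rw [hu] at h
  -- both sides send the common insertion point to the inserted element
  have hm : m₁ = m₂ := by
    have e := congrArg (· (insertionPoint P (S.erase m₂) m₂ σ₂)) h
    simpa [mul_apply, hσ₁.1 m₁ (notMem_erase m₁ S), hσ₂.1 m₂ (notMem_erase m₂ S)]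
      using e
  subst hm
  exact ⟨rfl, mul_right_cancel h⟩

theorem IsTransversePerm.exists_insertMaximal_eq (hτ : IsTransversePerm P S τ)
    (hS : S.Nonempty) :
    ∃ m ∈ maximals P S, ∃ σ,
      IsTransversePerm P (S.erase m) σ ∧ insertMaximal P S m σ = τ := by
  have hne := hτ.sinkElements_nonempty hS
  have hv : (sinkElements P S τ).max' hne ∈ sinkElements P S τ := max'_mem _ _
  set v := (sinkElements P S τ).max' hne
  obtain ⟨hσ, hvc⟩ := hτ.mul_swap_of_mem_sinkElements hv
  have hm := hτ.apply_mem_maximals hv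
  refine ⟨τ v, hm, τ * swap v (τ v), hσ, ?_⟩
  have hsinks := (hσ.mul_swap_of_mem_insertionCandidates hm hvc).2
  rw [mul_swap_mul_self] at hsinks
  rw [insertMaximal, insertionPoint_eq_max' hsinks.symm hne]
  exact mul_swap_mul_self v (τ v) τ

variable [Fintype α]

variable (P) in
def transversePerms (S : Finset α) : Finset (Perm α) :=
  univ.filter (IsTransversePerm P S)

theorem mem_transversePerms : σ ∈ transversePerms P S ↔ IsTransversePerm P S σ := by
  simp [transversePerms]

theorem transversePerms_empty : transversePerms P (∅ : Finset α) = {1} := by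
  ext σ
  rw [mem_transversePerms, mem_singleton]
  refine ⟨fun hσ => Equiv.ext fun x => hσ.1 x (notMem_empty x), ?_⟩
  rintro rfl
  refine ⟨fun _ _ => rfl, fun B hB => by simp [cycleBlocksOn] at hB, fun B C hBC _ => ?_⟩
  simpa [cycleBlocksOn] using (QRel.mem hBC).1

theorem card_transversePerms_eq_sum (hS : S.Nonempty) :
    #(transversePerms P S) = ∑ m ∈ maximals P S, #(transversePerms P (S.erase m)) := by
  rw [← card_sigma]
  refine (card_bij (fun p _ => insertMaximal P S p.1 p.2) (fun p hp => ?_) ?_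
    (fun τ hτ => ?_)).symm
  · obtain ⟨hm, hσ⟩ := mem_sigma.1 hp
    exact mem_transversePerms.2 ((mem_transversePerms.1 hσ).transverse_insertMaximal hm)
  · rintro ⟨m₁, σ₁⟩ hp₁ ⟨m₂, σ₂⟩ hp₂ h
    obtain ⟨hm₁, hσ₁⟩ := mem_sigma.1 hp₁
    obtain ⟨hm₂, hσ₂⟩ := mem_sigma.1 hp₂
    obtain ⟨rfl, rfl⟩ := insertMaximal_inj hm₁ (mem_transversePerms.1 hσ₁) hm₂
      (mem_transversePerms.1 hσ₂) h
    rfl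
  · obtain ⟨m, hm, σ, hσ, rfl⟩ := (mem_transversePerms.1 hτ).exists_insertMaximal_eq hS
    exact ⟨⟨m, σ⟩, mem_sigma.2 ⟨hm, mem_transversePerms.2 hσ⟩, rfl⟩

end Counting

section LinearExtensions

variable [DecidableEq α] (P : PartialOrder α)

def linearExtensions (S : Finset α) : Finset (List α) :=
  S.toList.permutations.toFinset.filter fun l => l.Pairwise fun a b => ¬ P.le b a

variable {P} {S : Finset α} {l : List α} {m : α}

theorem mem_linearExtensions : l ∈ linearExtensions P S ↔
    l.Nodup ∧ l.toFinset = S ∧ l.Pairwise fun a b => ¬ P.le b a := by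
  rw [linearExtensions, mem_filter, List.mem_toFinset, List.mem_permutations, ← and_assoc]
  refine and_congr_left'
    ⟨fun h => ⟨h.nodup_iff.2 (nodup_toList S), ?_⟩, fun ⟨hnd, hS⟩ => ?_⟩
  · rw [List.toFinset_eq_of_perm _ _ h, toList_toFinset]
  · exact List.perm_of_nodup_nodup_toFinset_eq hnd (nodup_toList S) (by rw [hS, toList_toFinset])

theorem append_singleton_mem_linearExtensions_iff :
    l ++ [m] ∈ linearExtensions P S ↔
      m ∈ maximals P S ∧ l ∈ linearExtensions P (S.erase m) := by
  simp only [mem_linearExtensions, mem_maximals, List.nodup_append, List.pairwise_append,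
    List.toFinset_append, List.nodup_singleton, List.pairwise_singleton, List.mem_singleton,
    forall_eq, true_and, ne_eq]
  constructor
  · rintro ⟨⟨hnd, hml⟩, rfl, hpw, hlast⟩
    have hml' : m ∉ l := fun h => hml m h rfl
    refine ⟨⟨by simp, fun x hx hmx => ?_⟩, hnd, ?_, hpw⟩
    · rcases mem_union.1 hx with hx | hx
      · exact absurd hmx (hlast x (List.mem_toFinset.1 hx))
      · simpa using hx
    · ext x
      rcases eq_or_ne x m with rfl | hxm
      · simpa using hml'
      · simp [hxm]
  · rintro ⟨⟨hmS, hmax⟩, hnd, hl, hpw⟩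
    have hml : m ∉ l := fun h => by
      have : m ∈ S.erase m := hl ▸ List.mem_toFinset.2 h
      simp at this
    refine ⟨⟨hnd, fun a ha h => hml (h ▸ ha)⟩, ?_, hpw, fun a ha hma => ?_⟩
    · rw [hl]
      ext x
      rcases eq_or_ne x m with rfl | hxm
      · simpa using hmS
      · simp [hxm]
    · have haS : a ∈ S.erase m := hl ▸ List.mem_toFinset.2 ha
      exact (mem_erase.1 haS).1 (hmax a (mem_of_mem_erase haS) hma)

theorem linearExtensions_empty : linearExtensions P (∅ : Finset α) = {[]} := by
  ext l
  rw [mem_linearExtensions, mem_singleton]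
  refine ⟨fun ⟨_, hl, _⟩ => List.toFinset_eq_empty_iff l |>.1 hl, ?_⟩
  rintro rfl
  exact ⟨List.nodup_nil, rfl, List.Pairwise.nil⟩

theorem card_linearExtensions_eq_sum (hS : S.Nonempty) :
    #(linearExtensions P S) = ∑ m ∈ maximals P S, #(linearExtensions P (S.erase m)) := by
  rw [← card_sigma]
  refine (card_bij (fun p _ => p.2 ++ [p.1]) (fun p hp => ?_) ?_ (fun l hl => ?_)).symm
  · exact append_singleton_mem_linearExtensions_iff.2 (mem_sigma.1 hp)
  · rintro ⟨m₁, l₁⟩ - ⟨m₂, l₂⟩ - h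
    obtain ⟨hl, hm⟩ := List.append_inj' h rfl
    obtain rfl : m₁ = m₂ := List.singleton_inj.1 hm
    obtain rfl : l₁ = l₂ := hl
    rfl
  · rcases List.eq_nil_or_concat' l with rfl | ⟨l, m, rfl⟩
    · obtain ⟨-, hS', -⟩ := mem_linearExtensions.1 hl
      exact absurd hS'.symm hS.ne_empty
    · exact ⟨⟨m, l⟩, mem_sigma.2 (append_singleton_mem_linearExtensions_iff.1 hl), rfl⟩

end LinearExtensions

theorem card_linearExtensions_eq_card_transversePerms {α : Type*} [Fintype α] [LinearOrder α]
    (P : PartialOrder α) (S : Finset α) : #(linearExtensions P S) = #(transversePerms P S) := by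
  induction S using Finset.strongInduction with
  | H S ih =>
    rcases S.eq_empty_or_nonempty with rfl | hS
    · rw [linearExtensions_empty, transversePerms_empty, card_singleton, card_singleton]
    · rw [card_linearExtensions_eq_sum hS, card_transversePerms_eq_sum hS]
      exact sum_congr rfl fun m hm => ih _ (erase_ssubset (mem_maximals.1 hm).1)

theorem card_linearExtension_perms_eq (n : ℕ) (P : PartialOrder (Fin n)) :
    #(univ.filter fun σ : Perm (Fin n) => ∀ i j : Fin n, P.le (σ i) (σ j) → i ≤ j) =
      #(linearExtensions P univ) := by
  refine card_bij (fun σ _ => List.ofFn σ) (fun σ hσ => ?_) ?_ (fun l hl => ?_)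
  · refine mem_linearExtensions.2 ⟨List.nodup_ofFn.2 σ.injective, ?_, ?_⟩
    · ext x
      simpa using σ.surjective x
    · exact List.pairwise_ofFn.2 fun i j hij hle => not_le.2 hij ((mem_filter.1 hσ).2 j i hle)
  · exact fun σ₁ _ σ₂ _ h => Equiv.coe_fn_injective (List.ofFn_injective h)
  · obtain ⟨hnd, hl, hpw⟩ := mem_linearExtensions.1 hl
    have hlen : l.length = n := by
      rw [← List.toFinset_card_of_nodup hnd, hl, card_univ, Fintype.card_fin]
    let σ : Perm (Fin n) := (finCongr hlen.symm).trans
      (hnd.getEquivOfForallMemList l fun x => List.mem_toFinset.1 (hl ▸ mem_univ x))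
    refine ⟨σ, mem_filter.2 ⟨mem_univ σ, fun i j hle => le_of_not_gt fun hji => ?_⟩, ?_⟩
    · exact List.pairwise_iff_get.1 hpw (Fin.cast hlen.symm j) (Fin.cast hlen.symm i) hji hle
    · exact List.ext_get (by simp [hlen]) fun k _ _ => by simp [σ]

theorem transversePerms_univ (n : ℕ) (P : PartialOrder (Fin n)) :
    transversePerms P univ =
      univ.filter fun σ : Perm (Fin n) => PTransverseParts P (cycleBlocks σ) := by
  have hblocks : ∀ σ : Perm (Fin n), cycleBlocksOn univ σ = cycleBlocks σ := fun σ => by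
    unfold cycleBlocksOn cycleBlocks cycleBlock
    congr!
  ext σ
  simp [transversePerms, IsTransversePerm, hblocks]

end PTransverse

end

/-- For any finite poset `P` on `[n]`, the number of linear extensions of `P` (bijective
listings `σ` of `[n]` such that `σ i ≤_P σ j` implies `i ≤ j`) equals the number of
`P`-transverse permutations (permutations whose cycle partition is `P`-transverse). -/
theorem stmt11 (n : ℕ) (P : PartialOrder (Fin n)) :
    (Finset.univ.filter fun σ : Equiv.Perm (Fin n) =>
        ∀ i j : Fin n, P.le (σ i) (σ j) → i ≤ j).card =
    (Finset.univ.filter fun σ : Equiv.Perm (Fin n) =>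
        PTransverseParts P (cycleBlocks σ)).card := by
  rw [PTransverse.card_linearExtension_perms_eq, ← PTransverse.transversePerms_univ,
    PTransverse.card_linearExtensions_eq_card_transversePerms]
end

section
/- For nonnegative integers a and b, the number of set partitions of the disjoint union of two chains C_a and C_b (with a and b elements) that are transverse to the poset C_a ⊔ C_b and have exactly k two-element blocks equals C(a,k)·C(b,k); consequently ∑_{k=0}^{min(a,b)} C(a,k)·C(b,k) = C(a+b, a). -/
/-- The disjoint union of two incomparable chains of sizes `a` and `b`, as a poset on
`Fin (a+b)`: the first `a` elements form a chain (in index order), the last `b` elements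
form a chain, and there are no other relations. -/
def chainsTwo (a b : ℕ) : PartialOrder (Fin (a + b)) where
  le i j := (i.1 < a ∧ j.1 < a ∧ i.1 ≤ j.1) ∨ (a ≤ i.1 ∧ a ≤ j.1 ∧ i.1 ≤ j.1)
  lt i j := ((i.1 < a ∧ j.1 < a ∧ i.1 ≤ j.1) ∨ (a ≤ i.1 ∧ a ≤ j.1 ∧ i.1 ≤ j.1)) ∧
    ¬ ((j.1 < a ∧ i.1 < a ∧ j.1 ≤ i.1) ∨ (a ≤ j.1 ∧ a ≤ i.1 ∧ j.1 ≤ i.1))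
  le_refl i := by
    show (i.1 < a ∧ i.1 < a ∧ i.1 ≤ i.1) ∨ (a ≤ i.1 ∧ a ≤ i.1 ∧ i.1 ≤ i.1)
    omega
  le_trans i j k h1 h2 := by
    have h1' : (i.1 < a ∧ j.1 < a ∧ i.1 ≤ j.1) ∨ (a ≤ i.1 ∧ a ≤ j.1 ∧ i.1 ≤ j.1) := h1
    have h2' : (j.1 < a ∧ k.1 < a ∧ j.1 ≤ k.1) ∨ (a ≤ j.1 ∧ a ≤ k.1 ∧ j.1 ≤ k.1) := h2
    clear h1 h2
    show (i.1 < a ∧ k.1 < a ∧ i.1 ≤ k.1) ∨ (a ≤ i.1 ∧ a ≤ k.1 ∧ i.1 ≤ k.1)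
    omega
  le_antisymm i j h1 h2 := by
    have h1' : (i.1 < a ∧ j.1 < a ∧ i.1 ≤ j.1) ∨ (a ≤ i.1 ∧ a ≤ j.1 ∧ i.1 ≤ j.1) := h1
    have h2' : (j.1 < a ∧ i.1 < a ∧ j.1 ≤ i.1) ∨ (a ≤ j.1 ∧ a ≤ i.1 ∧ j.1 ≤ i.1) := h2
    clear h1 h2
    exact Fin.ext (by omega)

open scoped Classical


open Finset

section Transverse

variable {α : Type*} (P : PartialOrder α)

lemma QRel.mem_parts_right {parts : Finset (Finset α)} {B C : Finset α}
    (h : QRel P parts B C) : C ∈ parts := by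
  induction h with
  | single h => exact h.2.1
  | tail _ h => exact h.2.1

lemma Finpartition.mem_part_comm [DecidableEq α] {s : Finset α} (π : Finpartition s)
    {z w : α} : w ∈ π.part z ↔ z ∈ π.part w := by
  simp only [Finpartition.mem_part_iff_exists, and_comm]

variable [Fintype α] [DecidableEq α] {π : Finpartition (univ : Finset α)}

theorem Finpartition.eq_ofSetoid_ker {β : Type*} {f : α → β}
    (h : ∀ z w, w ∈ π.part z ↔ f z = f w) : π = Finpartition.ofSetoid (Setoid.ker f) := by
  have hpart : ∀ z, π.part z = (Finpartition.ofSetoid (Setoid.ker f)).part z := fun z => by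
    ext w
    rw [h, Finpartition.mem_part_ofSetoid_iff_rel, Setoid.ker_def]
  have mem_parts : ∀ (σ : Finpartition (univ : Finset α)) B, B ∈ σ.parts ↔ ∃ z, σ.part z = B :=
    fun σ B => ⟨fun hB => by simpa using σ.part_surjOn hB,
      fun ⟨z, hz⟩ => hz ▸ σ.part_mem.2 (mem_univ z)⟩
  ext B
  simp only [mem_parts, hpart]

lemma QRel.le_of_monotone {β : Type*} [Preorder β] {f : α → β}
    (hf : ∀ p q, P.le p q → f p ≤ f q) (hconst : ∀ z w, w ∈ π.part z → f z = f w)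
    {B C : Finset α} (h : QRel P π.parts B C) : ∀ p ∈ B, ∀ q ∈ C, f p ≤ f q := by
  have hblock : ∀ B ∈ π.parts, ∀ p ∈ B, ∀ q ∈ B, f p = f q := fun B hB p hp q hq =>
    hconst p q (π.part_eq_of_mem hB hp ▸ hq)
  induction h with
  | single h =>
    obtain ⟨hB, hC, p₀, hp₀, q₀, hq₀, hle⟩ := h
    exact fun p hp q hq => (hblock _ hB p hp p₀ hp₀).trans_le <|
      (hf _ _ hle).trans_eq (hblock _ hC q₀ hq₀ q hq)
  | tail hBC hCD ih =>
    obtain ⟨r, hr⟩ := π.nonempty_of_mem_parts (QRel.mem_parts_right P hBC)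
    obtain ⟨hC, hD, r₀, hr₀, s₀, hs₀, hle⟩ := hCD
    exact fun p hp q hq => (ih p hp r hr).trans <| (hblock _ hC r hr r₀ hr₀).trans_le <|
      (hf _ _ hle).trans_eq (hblock _ hD s₀ hs₀ q hq)

theorem pTransverseParts_ofSetoid_ker {β : Type*} [PartialOrder β] {f : α → β}
    (hf : ∀ p q, P.le p q → p ≠ q → f p < f q) :
    PTransverseParts P (Finpartition.ofSetoid (Setoid.ker f)).parts := by
  set σ := Finpartition.ofSetoid (Setoid.ker f)
  have mem_part : ∀ {z w}, w ∈ σ.part z ↔ f z = f w := by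
    intro z w
    rw [Finpartition.mem_part_ofSetoid_iff_rel, Setoid.ker_def]
  have hmono : ∀ p q, P.le p q → f p ≤ f q := fun p q hpq =>
    (eq_or_ne p q).elim (fun h => h ▸ le_rfl) fun h => (hf p q hpq h).le
  refine ⟨fun B hB p hp q hq hpq => ?_, fun B C hBC hCB => ?_⟩
  · by_contra hne
    exact (hf p q hpq hne).ne (mem_part.1 (σ.part_eq_of_mem hB hp ▸ hq))
  · have hB := QRel.mem_parts_right P hCB
    have hC := QRel.mem_parts_right P hBC
    obtain ⟨p, hp⟩ := σ.nonempty_of_mem_parts hB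
    obtain ⟨q, hq⟩ := σ.nonempty_of_mem_parts hC
    have hconst : ∀ z w, w ∈ σ.part z → f z = f w := fun _ _ => mem_part.1
    have hpq : f p = f q := (QRel.le_of_monotone P hmono hconst hBC p hp q hq).antisymm
      (QRel.le_of_monotone P hmono hconst hCB q hq p hp)
    rw [← σ.part_eq_of_mem hB hp, ← σ.part_eq_of_mem hC hq]
    exact (σ.part_eq_of_mem (σ.part_mem.2 (mem_univ p)) (mem_part.2 hpq)).symm

lemma PTransverseParts.eq_of_mem_part_of_le (hπ : PTransverseParts P π.parts) {z w : α}
    (hw : w ∈ π.part z) (hzw : P.le z w) : z = w :=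
  hπ.1 _ (π.part_mem.2 (mem_univ z)) z (π.mem_part (mem_univ z)) w hw hzw

lemma PTransverseParts.part_eq_of_cross (hπ : PTransverseParts P π.parts) {x y x' y' : α}
    (hy : y ∈ π.part x) (hy' : y' ∈ π.part x') (hx : P.le x' x) (hyy : P.le y y') :
    π.part x' = π.part x :=
  hπ.2 _ _
    (.single ⟨π.part_mem.2 (mem_univ _), π.part_mem.2 (mem_univ _),
      x', π.mem_part (mem_univ _), x, π.mem_part (mem_univ _), hx⟩)
    (.single ⟨π.part_mem.2 (mem_univ _), π.part_mem.2 (mem_univ _), y, hy, y', hy', hyy⟩)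

end Transverse

section RankKey

variable {α : Type*} {P : PartialOrder α}

lemma filter_le_subset_filter_le (U : Finset α) {p q : α} (hpq : P.le p q) :
    {u ∈ U | P.le u p} ⊆ {u ∈ U | P.le u q} := fun u hu => by
  rw [mem_filter] at hu ⊢
  exact ⟨hu.1, P.le_trans u p q hu.2 hpq⟩

lemma eq_of_card_filter_le_le {U : Finset α} {p q : α} (hq : q ∈ U) (hpq : P.le p q)
    (hcard : #{u ∈ U | P.le u q} ≤ #{u ∈ U | P.le u p}) : p = q := by
  have hqq : q ∈ {u ∈ U | P.le u q} := mem_filter.2 ⟨hq, P.le_refl q⟩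
  rw [← eq_of_subset_of_card_le (filter_le_subset_filter_le U hpq) hcard] at hqq
  exact P.le_antisymm p q hpq (mem_filter.1 hqq).2

lemma image_card_filter_le_eq_Icc {C : Finset α} (hC : IsChain P.le (C : Set α)) :
    C.image (fun c => #{u ∈ C | P.le u c}) = Icc 1 #C := by
  have hinj : Set.InjOn (fun c => #{u ∈ C | P.le u c}) C := by
    intro c hc c' hc' hcc'
    wlog hle : P.le c c' generalizing c c'
    · exact (this hc' hc hcc'.symm ((hC.total hc hc').resolve_left hle)).symm
    exact eq_of_card_filter_le_le hc' hle hcc'.ge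
  refine eq_of_subset_of_card_le (fun n hn => ?_) ?_
  · obtain ⟨c, hc, rfl⟩ := mem_image.1 hn
    exact mem_Icc.2 ⟨card_pos.2 ⟨c, mem_filter.2 ⟨hc, P.le_refl c⟩⟩,
      card_le_card (filter_subset _ _)⟩
  · rw [Nat.card_Icc, card_image_of_injOn hinj]
    omega

variable [DecidableEq α]

/-- Points of `U` are keyed by their rank in `U`; a point outside `U` gets the tie-break
`ℓ z + 1`, which keeps it in its own fibre and makes the key strictly monotone when `ℓ` is. -/
noncomputable def rankKey (P : PartialOrder α) (ℓ : α → ℕ) (U : Finset α) (z : α) : ℕ ×ₗ ℕ :=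
  toLex (#{u ∈ U | P.le u z}, if z ∈ U then 0 else ℓ z + 1)

lemma rankKey_lt {ℓ : α → ℕ} (hℓ : ∀ p q, P.le p q → p ≠ q → ℓ p < ℓ q) (U : Finset α)
    ⦃p q : α⦄ (hpq : P.le p q) (hne : p ≠ q) : rankKey P ℓ U p < rankKey P ℓ U q := by
  refine Prod.Lex.toLex_lt_toLex'.2
    ⟨card_le_card (filter_le_subset_filter_le U hpq), fun hcard => ?_⟩
  by_cases hq : q ∈ U
  · exact absurd (eq_of_card_filter_le_le hq hpq hcard.ge) hne
  · have := hℓ p q hpq hne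
    simp only [hq, if_false]
    split_ifs <;> omega

lemma exists_rankKey_eq (ℓ : α → ℕ) {S T : Finset α} (hS : IsChain P.le (S : Set α))
    (hT : IsChain P.le (T : Set α)) (hST : ∀ s ∈ S, ∀ t ∈ T, ¬P.le s t ∧ ¬P.le t s)
    (hcard : #S = #T) {s : α} (hs : s ∈ S) :
    ∃ t ∈ T, rankKey P ℓ (S ∪ T) t = rankKey P ℓ (S ∪ T) s := by
  have hSs : {u ∈ S ∪ T | P.le u s} = {u ∈ S | P.le u s} := by
    rw [filter_union, filter_false_of_mem fun t ht => (hST s hs t ht).2, union_empty]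
  obtain ⟨t, ht, hts⟩ : ∃ t ∈ T, #{u ∈ T | P.le u t} = #{u ∈ S | P.le u s} := by
    have h := mem_image_of_mem (fun c => #{u ∈ S | P.le u c}) hs
    rwa [image_card_filter_le_eq_Icc hS, hcard, ← image_card_filter_le_eq_Icc hT,
      mem_image] at h
  have hTt : {u ∈ S ∪ T | P.le u t} = {u ∈ T | P.le u t} := by
    rw [filter_union, filter_false_of_mem fun s' hs' => (hST s' hs' t ht).1, empty_union]
  refine ⟨t, ht, ?_⟩
  simp only [rankKey, hSs, hTt, hts, mem_union, hs, ht, true_or, or_true, if_true]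

end RankKey

section ChainsTwoOrder

variable {a b : ℕ}

lemma chainsTwo_le_iff {z w : Fin (a + b)} : (chainsTwo a b).le z w ↔
    (z.1 < a ∧ w.1 < a ∧ z.1 ≤ w.1) ∨ (a ≤ z.1 ∧ a ≤ w.1 ∧ z.1 ≤ w.1) := Iff.rfl

lemma chainsTwo_le_total {z w : Fin (a + b)} (h : z.1 < a ↔ w.1 < a) :
    (chainsTwo a b).le z w ∨ (chainsTwo a b).le w z := by
  simp only [chainsTwo_le_iff]
  omega

lemma lt_iff_of_chainsTwo_le {z w : Fin (a + b)} (h : (chainsTwo a b).le z w) :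
    (z.1 < a ↔ w.1 < a) := by
  rw [chainsTwo_le_iff] at h
  omega

lemma val_lt_of_chainsTwo_le {z w : Fin (a + b)} (h : (chainsTwo a b).le z w) (hne : z ≠ w) :
    z.1 < w.1 := by
  rw [chainsTwo_le_iff] at h
  have := Fin.val_ne_of_ne hne
  omega

lemma isChain_chainsTwo {C : Finset (Fin (a + b))}
    (hC : ∀ x ∈ C, ∀ y ∈ C, (x.1 < a ↔ y.1 < a)) :
    IsChain (chainsTwo a b).le (C : Set (Fin (a + b))) :=
  fun x hx y hy _ => chainsTwo_le_total (hC x hx y hy)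

end ChainsTwoOrder

namespace ChainsTwo

variable {a b : ℕ}

lemma eq_of_rankKey_eq (U : Finset (Fin (a + b))) {z w : Fin (a + b)} (h : z.1 < a ↔ w.1 < a)
    (hzw : rankKey (chainsTwo a b) Fin.val U z = rankKey (chainsTwo a b) Fin.val U w) :
    z = w := by
  have hlt := rankKey_lt (P := chainsTwo a b) (fun _ _ => val_lt_of_chainsTwo_le) U
  by_contra hne
  rcases chainsTwo_le_total h with hle | hle
  · exact (hlt hle hne).ne hzw
  · exact (hlt hle (Ne.symm hne)).ne hzw.symm

noncomputable def matched (π : Finpartition (univ : Finset (Fin (a + b)))) :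
    Finset (Fin (a + b)) :=
  {z | 1 < #(π.part z)}

section Transverse

variable {π : Finpartition (univ : Finset (Fin (a + b)))}

lemma mem_matched_of_mem_part {z w : Fin (a + b)} (hw : w ∈ π.part z) (hz : z ∈ matched π) :
    w ∈ matched π := by
  simpa only [matched, mem_filter, mem_univ, true_and,
    π.part_eq_of_mem (π.part_mem.2 (mem_univ z)) hw] using hz

lemma eq_of_mem_part (hπ : PTransverseParts (chainsTwo a b) π.parts) {x v w : Fin (a + b)}
    (hv : v ∈ π.part x) (hw : w ∈ π.part x) (h : v.1 < a ↔ w.1 < a) : v = w := by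
  rw [← π.part_eq_of_mem (π.part_mem.2 (mem_univ x)) hv] at hw
  rcases chainsTwo_le_total h with hvw | hwv
  · exact hπ.eq_of_mem_part_of_le _ hw hvw
  · exact (hπ.eq_of_mem_part_of_le _ (π.mem_part_comm.1 hw) hwv).symm

lemma card_part_le_two (hπ : PTransverseParts (chainsTwo a b) π.parts) (z : Fin (a + b)) :
    #(π.part z) ≤ 2 := by
  have h₁ : #{w ∈ π.part z | w.1 < a} ≤ 1 := card_le_one.2 fun u hu v hv => by
    rw [mem_filter] at hu hv
    exact eq_of_mem_part hπ hu.1 hv.1 (iff_of_true hu.2 hv.2)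
  have h₂ : #{w ∈ π.part z | ¬w.1 < a} ≤ 1 := card_le_one.2 fun u hu v hv => by
    rw [mem_filter] at hu hv
    exact eq_of_mem_part hπ hu.1 hv.1 (iff_of_false hu.2 hv.2)
  rw [← card_filter_add_card_filter_not (p := fun w : Fin (a + b) => w.1 < a)]
  omega

lemma card_twoBlocks_eq_card_filter_matched (hπ : PTransverseParts (chainsTwo a b) π.parts)
    (c : Fin (a + b) → Prop) [DecidablePred c]
    (hc : ∀ z w, c z → c w → (z.1 < a ↔ w.1 < a))
    (hc' : ∀ z w, ¬c z → ¬c w → (z.1 < a ↔ w.1 < a)) :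
    #{B ∈ π.parts | #B = 2} = #{z ∈ matched π | c z} := by
  symm
  refine card_bij (fun z _ => π.part z) (fun z hz => ?_) (fun z hz z' hz' hzz' => ?_) ?_
  · simp only [matched, mem_filter, mem_univ, true_and] at hz
    exact mem_filter.2 ⟨π.part_mem.2 (mem_univ z), by have := card_part_le_two hπ z; omega⟩
  · simp only [matched, mem_filter, mem_univ, true_and] at hz hz'
    exact eq_of_mem_part hπ (π.mem_part (mem_univ z)) (hzz' ▸ π.mem_part (mem_univ z'))
      (hc z z' hz.2 hz'.2)
  · intro B hB
    obtain ⟨hB, hcard⟩ := mem_filter.1 hB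
    obtain ⟨x, hx, y, hy, hxy⟩ := one_lt_card.1 (hcard ▸ one_lt_two : 1 < #B)
    obtain ⟨z, hzB, hz⟩ : ∃ z ∈ B, c z := by
      by_contra! h
      have hy' : y ∈ π.part x := π.part_eq_of_mem hB hx ▸ hy
      exact hxy (eq_of_mem_part hπ (π.mem_part (mem_univ x)) hy' (hc' x y (h x hx) (h y hy)))
    refine ⟨z, ?_, π.part_eq_of_mem hB hzB⟩
    simp only [matched, mem_filter, mem_univ, true_and, π.part_eq_of_mem hB hzB, hcard]
    exact ⟨one_lt_two, hz⟩

lemma card_twoBlocks_eq_card_filter_lt (hπ : PTransverseParts (chainsTwo a b) π.parts) :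
    #{B ∈ π.parts | #B = 2} = #{z ∈ matched π | z.1 < a} :=
  card_twoBlocks_eq_card_filter_matched hπ _ (fun _ _ => iff_of_true) fun _ _ => iff_of_false

lemma card_twoBlocks_eq_card_filter_not_lt (hπ : PTransverseParts (chainsTwo a b) π.parts) :
    #{B ∈ π.parts | #B = 2} = #{z ∈ matched π | ¬z.1 < a} :=
  card_twoBlocks_eq_card_filter_matched hπ _ (fun _ _ => iff_of_false) fun _ _ hz hw =>
    iff_of_true (not_not.1 hz) (not_not.1 hw)

lemma card_filter_le_le_of_mem_part (hπ : PTransverseParts (chainsTwo a b) π.parts)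
    {z w : Fin (a + b)} (hw : w ∈ π.part z) :
    #{u ∈ matched π | (chainsTwo a b).le u z} ≤ #{u ∈ matched π | (chainsTwo a b).le u w} := by
  obtain rfl | hwz := eq_or_ne w z
  · rfl
  have hzw : ¬(z.1 < a ↔ w.1 < a) := fun h =>
    hwz (eq_of_mem_part hπ hw (π.mem_part (mem_univ z)) h.symm)
  refine card_le_card_of_forall_subsingleton (fun u v => v ∈ π.part u ∧ v ≠ u)
    (fun u hu => ?_) (fun v _ u hu u' hu' => ?_)
  · obtain ⟨hu, huz⟩ := mem_filter.1 hu
    obtain ⟨v, hv, hvu⟩ := exists_mem_ne (by simpa [matched] using hu) u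
    have huv : ¬(u.1 < a ↔ v.1 < a) := fun h =>
      hvu (eq_of_mem_part hπ hv (π.mem_part (mem_univ u)) h.symm)
    have hvw : v.1 < a ↔ w.1 < a := by
      have := lt_iff_of_chainsTwo_le huz
      tauto
    refine ⟨v, mem_filter.2 ⟨mem_matched_of_mem_part hv hu, ?_⟩, hv, hvu⟩
    rcases chainsTwo_le_total hvw with hle | hle
    · exact hle
    · -- with `u ≤ z` and `w ≤ v` the blocks of `u` and `z` cross, hence coincide
      rw [← hπ.part_eq_of_cross _ hw hv huz hle] at hw
      exact eq_of_mem_part hπ hv hw hvw ▸ (chainsTwo a b).le_refl v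
  · obtain ⟨hu, hvu, -⟩ := hu
    obtain ⟨hu', hvu', -⟩ := hu'
    exact eq_of_mem_part hπ (π.mem_part_comm.1 hvu) (π.mem_part_comm.1 hvu')
      ((lt_iff_of_chainsTwo_le (mem_filter.1 hu).2).trans
        (lt_iff_of_chainsTwo_le (mem_filter.1 hu').2).symm)

lemma rankKey_eq_of_mem_part (hπ : PTransverseParts (chainsTwo a b) π.parts)
    {z w : Fin (a + b)} (hw : w ∈ π.part z) :
    rankKey (chainsTwo a b) Fin.val (matched π) z =
      rankKey (chainsTwo a b) Fin.val (matched π) w := by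
  by_cases hz : z ∈ matched π
  · have hcard := (card_filter_le_le_of_mem_part hπ hw).antisymm
      (card_filter_le_le_of_mem_part hπ (π.mem_part_comm.1 hw))
    simp only [rankKey, hcard, hz, mem_matched_of_mem_part hw hz, if_true]
  · have : #(π.part z) ≤ 1 := by simpa [matched] using hz
    rw [card_le_one.1 this w hw z (π.mem_part (mem_univ z))]

lemma mem_part_iff_rankKey_eq (hπ : PTransverseParts (chainsTwo a b) π.parts)
    (z w : Fin (a + b)) :
    w ∈ π.part z ↔ rankKey (chainsTwo a b) Fin.val (matched π) z =
      rankKey (chainsTwo a b) Fin.val (matched π) w := by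
  refine ⟨rankKey_eq_of_mem_part hπ, fun h => ?_⟩
  by_cases hzw : z.1 < a ↔ w.1 < a
  · rw [← eq_of_rankKey_eq _ hzw h]
    exact π.mem_part (mem_univ z)
  have hz : z ∈ matched π := by
    by_contra hz
    have h₂ := congrArg (fun k => (ofLex k).2) h
    simp only [rankKey, hz, if_false, ofLex_toLex] at h₂
    split_ifs at h₂
    exact hzw (by rw [Fin.ext (by omega : z.1 = w.1)])
  obtain ⟨v, hv, hvz⟩ := exists_mem_ne (by simpa [matched] using hz) z
  have hvw : v.1 < a ↔ w.1 < a := by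
    have : ¬(z.1 < a ↔ v.1 < a) := fun h' =>
      hvz (eq_of_mem_part hπ hv (π.mem_part (mem_univ z)) h'.symm)
    tauto
  rwa [eq_of_rankKey_eq _ hvw ((rankKey_eq_of_mem_part hπ hv).symm.trans h)] at hv

end Transverse

noncomputable def ofMatched (U : Finset (Fin (a + b))) :
    Finpartition (univ : Finset (Fin (a + b))) :=
  Finpartition.ofSetoid (Setoid.ker (rankKey (chainsTwo a b) Fin.val U))

lemma mem_part_ofMatched {U : Finset (Fin (a + b))} {z w : Fin (a + b)} :
    w ∈ (ofMatched U).part z ↔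
      rankKey (chainsTwo a b) Fin.val U z = rankKey (chainsTwo a b) Fin.val U w := by
  rw [ofMatched, Finpartition.mem_part_ofSetoid_iff_rel, Setoid.ker_def]

lemma pTransverseParts_ofMatched (U : Finset (Fin (a + b))) :
    PTransverseParts (chainsTwo a b) (ofMatched U).parts :=
  pTransverseParts_ofSetoid_ker _ <|
    rankKey_lt (P := chainsTwo a b) (fun _ _ => val_lt_of_chainsTwo_le) U

lemma ofMatched_matched {π : Finpartition (univ : Finset (Fin (a + b)))}
    (hπ : PTransverseParts (chainsTwo a b) π.parts) : ofMatched (matched π) = π :=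
  (Finpartition.eq_ofSetoid_ker (mem_part_iff_rankKey_eq hπ)).symm

lemma matched_ofMatched {S T : Finset (Fin (a + b))} (hS : ∀ s ∈ S, s.1 < a)
    (hT : ∀ t ∈ T, ¬t.1 < a) (hcard : #S = #T) : matched (ofMatched (S ∪ T)) = S ∪ T := by
  have hS' : IsChain (chainsTwo a b).le (S : Set (Fin (a + b))) :=
    isChain_chainsTwo fun x hx y hy => iff_of_true (hS x hx) (hS y hy)
  have hT' : IsChain (chainsTwo a b).le (T : Set (Fin (a + b))) :=
    isChain_chainsTwo fun x hx y hy => iff_of_false (hT x hx) (hT y hy)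
  have hST : ∀ s ∈ S, ∀ t ∈ T, ¬(chainsTwo a b).le s t ∧ ¬(chainsTwo a b).le t s :=
    fun s hs t ht => ⟨fun h => hT t ht ((lt_iff_of_chainsTwo_le h).1 (hS s hs)),
      fun h => hT t ht ((lt_iff_of_chainsTwo_le h).2 (hS s hs))⟩
  ext z
  simp only [matched, mem_filter, mem_univ, true_and]
  constructor
  · intro h
    obtain ⟨w, hw, hwz⟩ := exists_mem_ne h z
    by_contra hz
    have h₂ := congrArg (fun k => (ofLex k).2) (mem_part_ofMatched.1 hw)
    simp only [rankKey, hz, if_false, ofLex_toLex] at h₂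
    split_ifs at h₂
    exact hwz (Fin.ext (by omega))
  · intro hz
    obtain ⟨w, hzw, hkey⟩ : ∃ w, ¬(z.1 < a ↔ w.1 < a) ∧
        rankKey (chainsTwo a b) Fin.val (S ∪ T) w =
          rankKey (chainsTwo a b) Fin.val (S ∪ T) z := by
      rcases mem_union.1 hz with hz | hz
      · obtain ⟨t, ht, h⟩ := exists_rankKey_eq (P := chainsTwo a b) Fin.val hS' hT' hST hcard hz
        exact ⟨t, by simp [hS z hz, hT t ht], h⟩
      · obtain ⟨s, hs, h⟩ := exists_rankKey_eq (P := chainsTwo a b) Fin.val hT' hS'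
          (fun t ht s hs => (hST s hs t ht).symm) hcard.symm hz
        rw [union_comm] at h
        exact ⟨s, by simp [hS s hs, hT z hz], h⟩
    exact one_lt_card.2 ⟨z, mem_part_ofMatched.2 rfl, w, mem_part_ofMatched.2 hkey.symm,
      fun h => hzw (h ▸ Iff.rfl)⟩

lemma filter_matched_ofMatched {S T : Finset (Fin (a + b))}
    (hS : S ⊆ ({z | z.1 < a} : Finset (Fin (a + b))))
    (hT : T ⊆ ({z | ¬z.1 < a} : Finset (Fin (a + b)))) (hcard : #S = #T) :
    {z ∈ matched (ofMatched (S ∪ T)) | z.1 < a} = S ∧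
      {z ∈ matched (ofMatched (S ∪ T)) | ¬z.1 < a} = T := by
  have hS' : ∀ s ∈ S, s.1 < a := fun s hs => (mem_filter.1 (hS hs)).2
  have hT' : ∀ t ∈ T, ¬t.1 < a := fun t ht => (mem_filter.1 (hT ht)).2
  rw [matched_ofMatched hS' hT' hcard, filter_union, filter_union, filter_true_of_mem hS',
    filter_false_of_mem hT', filter_false_of_mem fun s hs => not_not.2 (hS' s hs),
    filter_true_of_mem hT', union_empty, empty_union]
  exact ⟨rfl, rfl⟩

lemma card_powersetCard_product (k : ℕ) :
    #(powersetCard k ({z | z.1 < a} : Finset (Fin (a + b))) ×ˢ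
        powersetCard k ({z | ¬z.1 < a} : Finset (Fin (a + b)))) = a.choose k * b.choose k := by
  have hA : #{z : Fin (a + b) | z.1 < a} = a := by
    rw [Fin.card_filter_val_lt]
    omega
  have hB : #{z : Fin (a + b) | ¬z.1 < a} = b := by
    rw [filter_not, card_sdiff_of_subset (filter_subset _ _), hA, card_univ, Fintype.card_fin]
    omega
  rw [card_product, card_powersetCard, card_powersetCard, hA, hB]

end ChainsTwo

theorem Nat.sum_range_choose_mul_choose (m n : ℕ) :
    ∑ k ∈ range (min m n + 1), m.choose k * n.choose k = (m + n).choose m := by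
  have hsupp : ∑ k ∈ range (min m n + 1), m.choose k * n.choose k =
      ∑ k ∈ range (m + 1), m.choose k * n.choose k :=
    sum_subset (range_subset_range.2 (by omega)) fun k hk hk' => by
      rw [mem_range] at hk hk'
      rw [Nat.choose_eq_zero_of_lt (by omega : n < k), mul_zero]
  rw [hsupp, add_comm m n, Nat.add_choose_eq, Finset.Nat.sum_antidiagonal_eq_sum_range_succ_mk]
  refine sum_congr rfl fun k hk => ?_
  rw [Nat.choose_symm (mem_range_succ_iff.1 hk), mul_comm]

open ChainsTwo in
/-- For the disjoint union of two chains of sizes `a` and `b`, the number of transverse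
partitions with exactly `k` two-element blocks is `C(a,k)·C(b,k)`; consequently
`∑_{k=0}^{min(a,b)} C(a,k)·C(b,k) = C(a+b, a)` (Chu–Vandermonde). -/
theorem stmt13 (a b : ℕ) :
    (∀ k : ℕ,
      (Finset.univ.filter fun π : Finpartition (Finset.univ : Finset (Fin (a + b))) =>
          PTransverseParts (chainsTwo a b) π.parts ∧
          (π.parts.filter fun B => B.card = 2).card = k).card
        = a.choose k * b.choose k) ∧
    ∑ k ∈ Finset.range (min a b + 1), a.choose k * b.choose k = (a + b).choose a := by
  refine ⟨fun k => ?_, Nat.sum_range_choose_mul_choose a b⟩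
  rw [← card_powersetCard_product]
  refine card_bij' (fun π _ => ({z ∈ matched π | z.1 < a}, {z ∈ matched π | ¬z.1 < a}))
    (fun p _ => ofMatched (p.1 ∪ p.2)) (fun π hπ => ?_) (fun p hp => ?_) (fun π hπ => ?_)
    (fun p hp => ?_)
  · obtain ⟨-, hT, rfl⟩ := mem_filter.1 hπ
    simp only [mem_product, mem_powersetCard]
    exact ⟨⟨filter_subset_filter _ (subset_univ _), (card_twoBlocks_eq_card_filter_lt hT).symm⟩,
      ⟨filter_subset_filter _ (subset_univ _), (card_twoBlocks_eq_card_filter_not_lt hT).symm⟩⟩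
  · obtain ⟨⟨hS, hSk⟩, hT, hTk⟩ := by simpa only [mem_product, mem_powersetCard] using hp
    refine mem_filter.2 ⟨mem_univ _, pTransverseParts_ofMatched _, ?_⟩
    rw [card_twoBlocks_eq_card_filter_lt (pTransverseParts_ofMatched _),
      (filter_matched_ofMatched hS hT (hSk.trans hTk.symm)).1, hSk]
  · rw [filter_union_filter_not_eq]
    exact ofMatched_matched (mem_filter.1 hπ).2.1
  · obtain ⟨⟨hS, hSk⟩, hT, hTk⟩ := by simpa only [mem_product, mem_powersetCard] using hp
    have h := filter_matched_ofMatched hS hT (hSk.trans hTk.symm)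
    exact Prod.ext h.1 h.2
end

section
/- If P is a finite poset of width two (every antichain has at most two elements), then every P-transverse set partition of the underlying set has all blocks of cardinality 1 or 2, and the map sending a P-transverse permutation to its cycle partition is a bijection from P-transverse permutations to P-transverse partitions. -/
/-!
A block of a `P`-transverse partition is an antichain, so width two leaves it one or two
elements. Hence every cycle of a `P`-transverse permutation `σ` has length at most two: `σ` is an
involution, and its cycle through `i` is `{i, σ i}`, so `σ` is read off its cycle partition.
Conversely, a partition into blocks of size at most two is the cycle partition of the involution
exchanging the two elements of each block, and that involution is transverse because
transversality depends only on the partition.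
-/

open Finset Equiv Equiv.Perm

theorem Finset.eq_of_pair_eq_pair_left {α : Type*} [DecidableEq α] {a b c : α}
    (h : ({a, b} : Finset α) = {a, c}) : b = c := by
  have hb : b ∈ ({a, c} : Finset α) := h ▸ mem_insert_of_mem (mem_singleton_self b)
  have hc : c ∈ ({a, b} : Finset α) := h ▸ mem_insert_of_mem (mem_singleton_self c)
  simp only [mem_insert, mem_singleton] at hb hc
  grind

theorem Finset.exists_eq_pair_of_card_le_two {α : Type*} [DecidableEq α] {s : Finset α} {a : α}
    (ha : a ∈ s) (hs : #s ≤ 2) : ∃ b, s = {a, b} := by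
  rw [← insert_erase ha]
  obtain hempty | ⟨b, hb⟩ := (s.erase a).eq_empty_or_nonempty
  · exact ⟨a, by simp [hempty]⟩
  · refine ⟨b, congrArg _ (eq_singleton_iff_unique_mem.2 ⟨hb, fun x hx => ?_⟩)⟩
    have : #(s.erase a) ≤ 1 := by rw [card_erase_of_mem ha]; omega
    exact card_le_one.1 this x hx b hb

theorem Finpartition.exists_involutive_part_eq_pair {α : Type*} [Fintype α] [DecidableEq α]
    (π : Finpartition (univ : Finset α)) (hπ : ∀ B ∈ π.parts, #B ≤ 2) :
    ∃ f : α → α, Function.Involutive f ∧ ∀ i, π.part i = {i, f i} := by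
  choose f hf using fun i =>
    exists_eq_pair_of_card_le_two (π.mem_part (mem_univ i)) (hπ _ (π.part_mem.2 (mem_univ i)))
  refine ⟨f, fun i => ?_, hf⟩
  have hsame : π.part (f i) = π.part i :=
    π.part_eq_of_mem (π.part_mem.2 (mem_univ i)) (by rw [hf i]; simp)
  rw [hf, hf, pair_comm i] at hsame
  exact eq_of_pair_eq_pair_left hsame

theorem Finpartition.ext_part {α : Type*} [DecidableEq α] {s : Finset α} {P Q : Finpartition s}
    (h : ∀ a, P.part a = Q.part a) : P = Q := by
  ext B
  constructor <;> intro hB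
  · obtain ⟨a, ha, rfl⟩ := P.part_surjOn hB
    rw [h]; exact Q.part_mem.2 ha
  · obtain ⟨a, ha, rfl⟩ := Q.part_surjOn hB
    rw [← h]; exact P.part_mem.2 ha

namespace Equiv.Perm

theorem sameCycle_iff_of_involutive {α : Type*} [Fintype α] {σ : Perm α}
    (hσ : Function.Involutive σ) {i j : α} :
    σ.SameCycle i j ↔ j = i ∨ j = σ i := by
  constructor
  · intro h
    obtain ⟨k, -, rfl⟩ := h.exists_pow_eq'
    rw [coe_pow]
    rcases Nat.even_or_odd k with hk | hk
    · simp [hσ.iterate_even hk]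
    · simp [hσ.iterate_odd hk]
  · rintro (rfl | rfl)
    exacts [SameCycle.refl _ _, sameCycle_apply_right.2 (SameCycle.refl _ _)]

variable {α : Type*} [Fintype α] [DecidableEq α]

theorem apply_apply_eq_self_of_card_sameCycle_le_two {σ : Perm α} {x : α}
    (hx : #{j | σ.SameCycle x j} ≤ 2) : σ (σ x) = x := by
  by_contra h
  have hx1 : σ x ≠ x := fun hh => h (by rw [hh, hh])
  have hx2 : σ (σ x) ≠ σ x := fun hh => hx1 (σ.injective hh)
  have hsub : ({x, σ x, σ (σ x)} : Finset α) ⊆ ({j | σ.SameCycle x j} : Finset α) := by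
    intro j hj
    simp only [mem_insert, mem_singleton] at hj
    rcases hj with rfl | rfl | rfl <;> simp [SameCycle.refl]
  have h3 : #{x, σ x, σ (σ x)} = 3 :=
    card_eq_three.2 ⟨_, _, _, hx1.symm, Ne.symm h, hx2.symm, rfl⟩
  have := card_le_card hsub
  omega

instance (σ : Perm α) : DecidableRel (SameCycle.setoid σ) :=
  inferInstanceAs (DecidableRel σ.SameCycle)

def cyclePartition (σ : Perm α) : Finpartition (univ : Finset α) :=
  Finpartition.ofSetoid (SameCycle.setoid σ)

theorem mem_cyclePartition_part {σ : Perm α} {i j : α} :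
    j ∈ σ.cyclePartition.part i ↔ σ.SameCycle i j :=
  Finpartition.mem_part_ofSetoid_iff_rel

theorem cyclePartition_part_of_involutive {σ : Perm α} (hσ : Function.Involutive σ) (i : α) :
    σ.cyclePartition.part i = {i, σ i} := by
  ext j
  rw [mem_cyclePartition_part, sameCycle_iff_of_involutive hσ]
  simp

theorem cyclePartition_parts_eq_cycleBlocks {n : ℕ} (σ : Perm (Fin n)) :
    σ.cyclePartition.parts = cycleBlocks σ :=
  rfl

end Equiv.Perm

theorem PTransverseParts.card_le_two {α : Type*} {P : PartialOrder α} {parts : Finset (Finset α)}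
    (hT : PTransverseParts P parts)
    (hwidth : ∀ s : Finset α, (∀ i ∈ s, ∀ j ∈ s, P.le i j → i = j) → #s ≤ 2)
    {B : Finset α} (hB : B ∈ parts) : #B ≤ 2 :=
  hwidth B (hT.1 B hB)

theorem PTransverseParts.involutive_of_cycleBlocks {n : ℕ} {P : PartialOrder (Fin n)}
    {σ : Perm (Fin n)} (hT : PTransverseParts P (cycleBlocks σ))
    (hwidth : ∀ s : Finset (Fin n), (∀ i ∈ s, ∀ j ∈ s, P.le i j → i = j) → #s ≤ 2) :
    Function.Involutive σ := fun x =>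
  apply_apply_eq_self_of_card_sameCycle_le_two
    (hT.card_le_two hwidth (mem_image_of_mem _ (mem_univ x)))

/-- If `P` has width two (every antichain has at most 2 elements), then every `P`-transverse
partition has all blocks of cardinality 1 or 2, and taking cycle partitions is a bijection
from `P`-transverse permutations onto `P`-transverse partitions. -/
theorem stmt14 (n : ℕ) (P : PartialOrder (Fin n))
    (hwidth : ∀ s : Finset (Fin n),
      (∀ i ∈ s, ∀ j ∈ s, P.le i j → i = j) → s.card ≤ 2) :
    (∀ π : Finpartition (Finset.univ : Finset (Fin n)),
      PTransverseParts P π.parts → ∀ B ∈ π.parts, B.card = 1 ∨ B.card = 2) ∧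
    Set.BijOn (fun σ : Equiv.Perm (Fin n) => cycleBlocks σ)
      {σ : Equiv.Perm (Fin n) | PTransverseParts P (cycleBlocks σ)}
      {s : Finset (Finset (Fin n)) |
        (∃ π : Finpartition (Finset.univ : Finset (Fin n)), π.parts = s) ∧
        PTransverseParts P s} := by
  refine ⟨fun π hT B hB => ?_, fun σ hσ => ⟨⟨σ.cyclePartition, rfl⟩, hσ⟩,
    fun σ hσ τ hτ hστ => ?_, ?_⟩
  · have := card_pos.2 (π.nonempty_of_mem_parts hB)
    have := hT.card_le_two hwidth hB
    omega
  · have hpart : σ.cyclePartition = τ.cyclePartition := Finpartition.ext hστ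
    refine Equiv.ext fun i => eq_of_pair_eq_pair_left (a := i) ?_
    rw [← cyclePartition_part_of_involutive (hσ.involutive_of_cycleBlocks hwidth),
      ← cyclePartition_part_of_involutive (hτ.involutive_of_cycleBlocks hwidth), hpart]
  · rintro _ ⟨⟨π, rfl⟩, hT⟩
    obtain ⟨f, hf, hπf⟩ := π.exists_involutive_part_eq_pair fun B => hT.card_le_two hwidth
    have hcycles : hf.toPerm.cyclePartition = π := Finpartition.ext_part fun i =>
      (cyclePartition_part_of_involutive hf i).trans (hπf i).symm
    have hblocks : cycleBlocks hf.toPerm = π.parts := by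
      rw [← cyclePartition_parts_eq_cycleBlocks, hcycles]
    exact ⟨hf.toPerm, show PTransverseParts P _ by rwa [hblocks], hblocks⟩
end

section
/- Let P = P₁ ∪ P₂ be a finite poset of width two, decomposed into two disjoint chains P₁, P₂, such that P₁ is an order ideal of P. Label P naturally so that P₁ gets labels 1,...,n₁ and P₂ gets labels n₁+1,...,n (compatibly with the chain orders). Then for every linear extension σ of P, the set {i : σ_i ∈ P₂, σ_{i+1} ∈ P₁, σ_i and σ_{i+1} incomparable in P} equals the ordinary descent set {i : σ_i > σ_{i+1}} of σ. -/
/-! A linear extension never lists `b` right after `a` with `b ≤_P a`. So at a descent `a > b`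
the two elements cannot lie in a common chain, whose labels increase along `≤_P`; hence `a ∈ P₂`
and `b ∈ P₁`, and `a ≤_P b` is impossible because `P₁` is an order ideal. -/

theorem le_and_lt_of_lt_of_not_le_of_chains {n n1 : ℕ} (P : PartialOrder (Fin n))
    (hchain1 : ∀ i j : Fin n, i.1 < n1 → j.1 < n1 → i ≤ j → P.le i j)
    (hchain2 : ∀ i j : Fin n, n1 ≤ i.1 → n1 ≤ j.1 → i ≤ j → P.le i j)
    {a b : Fin n} (hba : b < a) (hnle : ¬ P.le b a) : n1 ≤ a.1 ∧ b.1 < n1 := by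
  have hba' : b.1 < a.1 := hba
  have hble : b ≤ a := Fin.le_def.2 hba'.le
  by_cases ha : n1 ≤ a.1
  · refine ⟨ha, ?_⟩
    by_contra! hb
    exact hnle (hchain2 b a hb ha hble)
  · have ha : a.1 < n1 := not_le.1 ha
    exact absurd (hchain1 b a (hba'.trans ha) ha hble) hnle

/-- Let `P` be a width-two poset on `Fin n` decomposed into two disjoint chains
`P₁ = {i : i < n₁}` and `P₂ = {i : n₁ ≤ i}`, naturally labeled so that labels within each
chain increase along the chain (`hchain1`, `hchain2`) and such that `P₁` is an order ideal
(`hideal`).  Then for every linear extension `σ` of `P` (listed as `σ 0, σ 1, …`), the set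
`{i : σ_i ∈ P₂, σ_{i+1} ∈ P₁, σ_i and σ_{i+1} incomparable in P}` equals the ordinary
descent set `{i : σ_i > σ_{i+1}}`. -/
theorem stmt16 (n n1 : ℕ) (P : PartialOrder (Fin n))
    (hchain1 : ∀ i j : Fin n, i.1 < n1 → j.1 < n1 → (P.le i j ↔ i ≤ j))
    (hchain2 : ∀ i j : Fin n, n1 ≤ i.1 → n1 ≤ j.1 → (P.le i j ↔ i ≤ j))
    (hideal : ∀ i j : Fin n, P.le i j → j.1 < n1 → i.1 < n1) :
    ∀ σ : Equiv.Perm (Fin n),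
      (∀ i j : Fin n, P.le (σ i) (σ j) → i ≤ j) →
      ∀ (i : Fin n) (h : i.1 + 1 < n),
        ((n1 ≤ (σ i).1 ∧ (σ ⟨i.1 + 1, h⟩).1 < n1 ∧
            ¬ P.le (σ i) (σ ⟨i.1 + 1, h⟩) ∧ ¬ P.le (σ ⟨i.1 + 1, h⟩) (σ i))
          ↔ σ ⟨i.1 + 1, h⟩ < σ i) := by
  intro σ hσ i h
  have hnle : ¬ P.le (σ ⟨i.1 + 1, h⟩) (σ i) := fun hle =>
    Nat.not_succ_le_self i.1 (Fin.le_def.1 (hσ _ _ hle))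
  constructor
  · rintro ⟨ha, hb, -, -⟩
    exact Fin.lt_def.2 (hb.trans_le ha)
  · intro hba
    obtain ⟨ha, hb⟩ := le_and_lt_of_lt_of_not_le_of_chains P
      (fun i j hi hj => (hchain1 i j hi hj).2) (fun i j hi hj => (hchain2 i j hi hj).2) hba hnle
    exact ⟨ha, hb, fun hle => (hideal _ _ hle hb).not_ge ha, hnle⟩
end

section
/- Let P₁, P₂ be posets on disjoint finite sets and P₁ ⊕ P₂ their ordinal sum. A set partition π of the union is (P₁ ⊕ P₂)-transverse if and only if every block of π is contained entirely in P₁ or entirely in P₂, with the induced partitions of P₁ and P₂ being P₁-transverse and P₂-transverse respectively. -/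
/-- The underlying relation of the ordinal sum `P₁ ⊕ P₂`: `x ≤ y` iff `x, y` lie in the same
summand and are related there, or `x ∈ P₁` and `y ∈ P₂`. -/
def ordSumLe {A B : Type*} (P1 : PartialOrder A) (P2 : PartialOrder B) :
    A ⊕ B → A ⊕ B → Prop
  | Sum.inl a, Sum.inl a' => P1.le a a'
  | Sum.inl _, Sum.inr _ => True
  | Sum.inr _, Sum.inl _ => False
  | Sum.inr b, Sum.inr b' => P2.le b b'

/-- The ordinal sum `P₁ ⊕ P₂` of two posets, as a poset on the disjoint union. -/
def ordinalSum {A B : Type*} (P1 : PartialOrder A) (P2 : PartialOrder B) :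
    PartialOrder (A ⊕ B) where
  le := ordSumLe P1 P2
  lt x y := ordSumLe P1 P2 x y ∧ ¬ ordSumLe P1 P2 y x
  le_refl x := by cases x with
    | inl a => exact P1.le_refl a
    | inr b => exact P2.le_refl b
  le_trans x y z h1 h2 := by
    cases x <;> cases y <;> cases z <;>
      simp only [ordSumLe] at * <;>
      first
        | trivial
        | exact P1.le_trans _ _ _ h1 h2
        | exact P2.le_trans _ _ _ h1 h2
  le_antisymm x y h1 h2 := by
    cases x <;> cases y <;> simp only [ordSumLe] at * <;>
      first
        | trivial
        | exact congrArg _ (P1.le_antisymm _ _ h1 h2)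
        | exact congrArg _ (P2.le_antisymm _ _ h1 h2)

open Function Relation

namespace Relation.TransGen

variable {α : Type*} {r : α → α → Prop} {p : α → Prop} {a b : α}

theorem restrict_of_backward (hp : ∀ x y, r x y → p y → p x) (h : TransGen r a b)
    (hb : p b) : TransGen (fun x y => r x y ∧ p x ∧ p y) a b := by
  induction h with
  | single hab => exact single ⟨hab, hp _ _ hab hb, hb⟩
  | tail _ hcb ih =>
    have hc := hp _ _ hcb hb
    exact (ih hc).tail ⟨hcb, hc, hb⟩

theorem restrict_of_forward (hp : ∀ x y, r x y → p x → p y) (h : TransGen r a b)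
    (ha : p a) : TransGen (fun x y => r x y ∧ p x ∧ p y) a b := by
  induction h using TransGen.head_induction_on with
  | single hab => exact single ⟨hab, ha, hp _ _ hab ha⟩
  | head hac _ ih =>
    have hc := hp _ _ hac ha
    exact head ⟨hac, ha, hc⟩ (ih hc)

theorem restrict_head (h : TransGen (fun x y => r x y ∧ p x ∧ p y) a b) : p a := by
  obtain ⟨c, hac, -⟩ := head'_iff.mp h
  exact hac.2.1

theorem restrict_last (h : TransGen (fun x y => r x y ∧ p x ∧ p y) a b) : p b := by
  obtain ⟨c, -, hcb⟩ := tail'_iff.mp h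
  exact hcb.2.2

end Relation.TransGen

section Restrict

variable {α γ : Type*}

/-- `QRel P parts` is by definition `TransGen (QStep P parts)`. -/
def QStep (P : PartialOrder γ) (parts : Finset (Finset γ)) (B C : Finset γ) : Prop :=
  B ∈ parts ∧ C ∈ parts ∧ ∃ p ∈ B, ∃ q ∈ C, P.le p q

theorem QRel.left_mem {P : PartialOrder γ} {parts : Finset (Finset γ)} {B C : Finset γ}
    (h : QRel P parts B C) : B ∈ parts := by
  obtain ⟨D, hBD, -⟩ := TransGen.head'_iff.mp h
  exact hBD.1

abbrev InRange (f : α → γ) (s : Finset γ) : Prop := ∀ x ∈ s, ∃ a, x = f a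

/-- The partition induced on `α` by the blocks of `parts` that lie inside the range of `f`. -/
noncomputable def restrictParts [Fintype α] [DecidableEq α] [DecidableEq γ] (f : α → γ)
    (hf : Injective f) (parts : Finset (Finset γ)) : Finset (Finset α) :=
  (parts.filter (InRange f)).image fun s => s.preimage f hf.injOn

variable [DecidableEq γ] {f : α → γ} (hf : Injective f)
include hf

theorem image_preimage_of_inRange {s : Finset γ} (hs : InRange f s) :
    (s.preimage f hf.injOn).image f = s := by
  ext x
  simp only [Finset.mem_image, Finset.mem_preimage]
  constructor
  · rintro ⟨a, ha, rfl⟩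
    exact ha
  · intro hx
    obtain ⟨a, rfl⟩ := hs x hx
    exact ⟨a, hx, rfl⟩

theorem eq_of_preimage_eq {s t : Finset γ} (hs : InRange f s) (ht : InRange f t)
    (h : s.preimage f hf.injOn = t.preimage f hf.injOn) : s = t := by
  rw [← image_preimage_of_inRange hf hs, h, image_preimage_of_inRange hf ht]

variable [Fintype α] [DecidableEq α] {parts : Finset (Finset γ)}

theorem image_mem_of_mem_restrictParts {X : Finset α} (hX : X ∈ restrictParts f hf parts) :
    X.image f ∈ parts := by
  obtain ⟨s, hs, rfl⟩ := Finset.mem_image.mp hX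
  obtain ⟨hs, hsf⟩ := Finset.mem_filter.mp hs
  rwa [image_preimage_of_inRange hf hsf]

theorem preimage_mem_restrictParts {s : Finset γ} (hs : s ∈ parts) (hsf : InRange f s) :
    s.preimage f hf.injOn ∈ restrictParts f hf parts :=
  Finset.mem_image_of_mem _ (Finset.mem_filter.mpr ⟨hs, hsf⟩)

variable {P : PartialOrder α} {Q : PartialOrder γ}

theorem QRel.image_of_restrictParts (hmono : ∀ a b, P.le a b → Q.le (f a) (f b))
    {X Y : Finset α} (h : QRel P (restrictParts f hf parts) X Y) :
    QRel Q parts (X.image f) (Y.image f) := by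
  refine TransGen.lift (Finset.image f) ?_ _ _ h
  rintro X Y ⟨hX, hY, a, ha, b, hb, hab⟩
  exact ⟨image_mem_of_mem_restrictParts hf hX, image_mem_of_mem_restrictParts hf hY,
    f a, Finset.mem_image_of_mem f ha, f b, Finset.mem_image_of_mem f hb, hmono a b hab⟩

theorem qRel_restrictParts_of_transGen (hrefl : ∀ a b, Q.le (f a) (f b) → P.le a b)
    {s t : Finset γ} (h : TransGen (fun u v => QStep Q parts u v ∧ InRange f u ∧ InRange f v) s t) :
    QRel P (restrictParts f hf parts) (s.preimage f hf.injOn) (t.preimage f hf.injOn) := by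
  refine TransGen.lift (fun s => s.preimage f hf.injOn) ?_ _ _ h
  rintro u v ⟨⟨hu, hv, x, hx, y, hy, hxy⟩, hfu, hfv⟩
  obtain ⟨a, rfl⟩ := hfu x hx
  obtain ⟨b, rfl⟩ := hfv y hy
  exact ⟨preimage_mem_restrictParts hf hu hfu, preimage_mem_restrictParts hf hv hfv,
    a, Finset.mem_preimage.mpr hx, b, Finset.mem_preimage.mpr hy, hrefl a b hxy⟩

theorem PTransverseParts.restrictParts (hmono : ∀ a b, P.le a b → Q.le (f a) (f b))
    (h : PTransverseParts Q parts) : PTransverseParts P (restrictParts f hf parts) := by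
  refine ⟨fun X hX i hi j hj hij => hf ?_, fun X Y hXY hYX => ?_⟩
  · exact h.1 _ (image_mem_of_mem_restrictParts hf hX) _ (Finset.mem_image_of_mem f hi) _
      (Finset.mem_image_of_mem f hj) (hmono i j hij)
  · exact Finset.image_injective hf <|
      h.2 _ _ (hXY.image_of_restrictParts hf hmono) (hYX.image_of_restrictParts hf hmono)

theorem antichain_of_restrictParts (hrefl : ∀ a b, Q.le (f a) (f b) → P.le a b)
    (h : ∀ X ∈ restrictParts f hf parts, ∀ i ∈ X, ∀ j ∈ X, P.le i j → i = j)
    {s : Finset γ} (hs : s ∈ parts) (hsf : InRange f s) :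
    ∀ x ∈ s, ∀ y ∈ s, Q.le x y → x = y := by
  intro x hx y hy hxy
  obtain ⟨a, rfl⟩ := hsf x hx
  obtain ⟨b, rfl⟩ := hsf y hy
  exact congrArg f <| h _ (preimage_mem_restrictParts hf hs hsf) a (Finset.mem_preimage.mpr hx)
    b (Finset.mem_preimage.mpr hy) (hrefl a b hxy)

end Restrict

section OrdinalSum

variable {A B : Type*} (P1 : PartialOrder A) (P2 : PartialOrder B)

theorem ordinalSum_le_inl_inl_iff (a a' : A) :
    (ordinalSum P1 P2).le (.inl a) (.inl a') ↔ P1.le a a' := Iff.rfl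

theorem ordinalSum_le_inr_inr_iff (b b' : B) :
    (ordinalSum P1 P2).le (.inr b) (.inr b') ↔ P2.le b b' := Iff.rfl

theorem ordinalSum_le_inl_inr (a : A) (b : B) : (ordinalSum P1 P2).le (.inl a) (.inr b) :=
  trivial

theorem ordinalSum_not_le_inr_inl (a : A) (b : B) : ¬ (ordinalSum P1 P2).le (.inr b) (.inl a) :=
  id

theorem inRange_inl_or_inr_of_antichain {s : Finset (A ⊕ B)}
    (hs : ∀ x ∈ s, ∀ y ∈ s, (ordinalSum P1 P2).le x y → x = y) :
    InRange Sum.inl s ∨ InRange Sum.inr s := by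
  rw [or_iff_not_imp_left]
  intro hl
  simp only [InRange, not_forall, not_exists] at hl
  obtain ⟨x, hx, hxl⟩ := hl
  obtain ⟨b, rfl⟩ : ∃ b, x = .inr b := by
    cases x with
    | inl a => exact absurd rfl (hxl a)
    | inr b => exact ⟨b, rfl⟩
  intro y hy
  cases y with
  | inl a => exact absurd (hs _ hy _ hx (ordinalSum_le_inl_inr P1 P2 a b)) Sum.inl_ne_inr
  | inr b' => exact ⟨b', rfl⟩

section Blocks

variable {parts : Finset (Finset (A ⊕ B))}
  (hpure : ∀ s ∈ parts, InRange Sum.inl s ∨ InRange Sum.inr s)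
include hpure

theorem inRange_inl_of_qStep_ordinalSum {u v : Finset (A ⊕ B)}
    (h : QStep (ordinalSum P1 P2) parts u v) (hv : InRange Sum.inl v) : InRange Sum.inl u := by
  obtain ⟨hu, -, x, hx, y, hy, hxy⟩ := h
  obtain ⟨a, rfl⟩ := hv y hy
  refine (hpure u hu).resolve_right fun hur => ?_
  obtain ⟨b, rfl⟩ := hur x hx
  exact ordinalSum_not_le_inr_inl P1 P2 a b hxy

theorem inRange_inr_of_qStep_ordinalSum {u v : Finset (A ⊕ B)}
    (h : QStep (ordinalSum P1 P2) parts u v) (hu : InRange Sum.inr u) : InRange Sum.inr v := by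
  obtain ⟨-, hv, x, hx, y, hy, hxy⟩ := h
  obtain ⟨b, rfl⟩ := hu x hx
  refine (hpure v hv).resolve_left fun hvl => ?_
  obtain ⟨a, rfl⟩ := hvl y hy
  exact ordinalSum_not_le_inr_inl P1 P2 a b hxy

variable [Fintype A] [Fintype B] [DecidableEq A] [DecidableEq B]

theorem ordinalSum_qRel_antisymm
    (h1 : PTransverseParts P1 (restrictParts Sum.inl Sum.inl_injective parts))
    (h2 : PTransverseParts P2 (restrictParts Sum.inr Sum.inr_injective parts))
    {s t : Finset (A ⊕ B)} (hst : QRel (ordinalSum P1 P2) parts s t)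
    (hts : QRel (ordinalSum P1 P2) parts t s) : s = t := by
  rcases hpure s hst.left_mem with hs | hs
  · have hts' := TransGen.restrict_of_backward
      (fun _ _ h => inRange_inl_of_qStep_ordinalSum P1 P2 hpure h) hts hs
    have ht := TransGen.restrict_head hts'
    have hst' := TransGen.restrict_of_backward
      (fun _ _ h => inRange_inl_of_qStep_ordinalSum P1 P2 hpure h) hst ht
    have hrefl := fun a a' => (ordinalSum_le_inl_inl_iff P1 P2 a a').mp
    exact eq_of_preimage_eq Sum.inl_injective hs ht <| h1.2 _ _
      (qRel_restrictParts_of_transGen Sum.inl_injective hrefl hst')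
      (qRel_restrictParts_of_transGen Sum.inl_injective hrefl hts')
  · have hst' := TransGen.restrict_of_forward
      (fun _ _ h => inRange_inr_of_qStep_ordinalSum P1 P2 hpure h) hst hs
    have ht := TransGen.restrict_last hst'
    have hts' := TransGen.restrict_of_forward
      (fun _ _ h => inRange_inr_of_qStep_ordinalSum P1 P2 hpure h) hts ht
    have hrefl := fun b b' => (ordinalSum_le_inr_inr_iff P1 P2 b b').mp
    exact eq_of_preimage_eq Sum.inr_injective hs ht <| h2.2 _ _
      (qRel_restrictParts_of_transGen Sum.inr_injective hrefl hst')
      (qRel_restrictParts_of_transGen Sum.inr_injective hrefl hts')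

end Blocks

theorem ordinalSum_pTransverseParts_iff [Fintype A] [Fintype B] [DecidableEq A] [DecidableEq B]
    (parts : Finset (Finset (A ⊕ B))) :
    PTransverseParts (ordinalSum P1 P2) parts ↔
      (∀ s ∈ parts, InRange Sum.inl s ∨ InRange Sum.inr s) ∧
        PTransverseParts P1 (restrictParts Sum.inl Sum.inl_injective parts) ∧
        PTransverseParts P2 (restrictParts Sum.inr Sum.inr_injective parts) := by
  constructor
  · intro h
    exact ⟨fun s hs => inRange_inl_or_inr_of_antichain P1 P2 (h.1 s hs),
      h.restrictParts Sum.inl_injective (Q := ordinalSum P1 P2)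
        fun a a' => (ordinalSum_le_inl_inl_iff P1 P2 a a').mpr,
      h.restrictParts Sum.inr_injective (Q := ordinalSum P1 P2)
        fun b b' => (ordinalSum_le_inr_inr_iff P1 P2 b b').mpr⟩
  · rintro ⟨hpure, h1, h2⟩
    refine ⟨fun s hs => ?_, fun s t => ordinalSum_qRel_antisymm P1 P2 hpure h1 h2⟩
    rcases hpure s hs with hsl | hsr
    · exact antichain_of_restrictParts Sum.inl_injective (Q := ordinalSum P1 P2)
        (fun a a' => (ordinalSum_le_inl_inl_iff P1 P2 a a').mp) h1.1 hs hsl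
    · exact antichain_of_restrictParts Sum.inr_injective (Q := ordinalSum P1 P2)
        (fun b b' => (ordinalSum_le_inr_inr_iff P1 P2 b b').mp) h2.1 hs hsr

end OrdinalSum

/-- A set partition of the disjoint union is `(P₁ ⊕ P₂)`-transverse iff every block lies
entirely in `P₁` or entirely in `P₂`, and the induced partitions of `P₁` and `P₂` are
`P₁`-transverse and `P₂`-transverse respectively. -/
theorem stmt18 {A B : Type*} [Fintype A] [Fintype B] [DecidableEq A] [DecidableEq B]
    (P1 : PartialOrder A) (P2 : PartialOrder B)
    (π : Finpartition (Finset.univ : Finset (A ⊕ B))) :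
    PTransverseParts (ordinalSum P1 P2) π.parts ↔
      ((∀ s ∈ π.parts, (∀ x ∈ s, ∃ a : A, x = Sum.inl a) ∨
          (∀ x ∈ s, ∃ b : B, x = Sum.inr b)) ∧
        PTransverseParts P1
          (((π.parts.filter fun s => ∀ x ∈ s, ∃ a : A, x = Sum.inl a)).image
            fun s => s.preimage Sum.inl Sum.inl_injective.injOn) ∧
        PTransverseParts P2
          (((π.parts.filter fun s => ∀ x ∈ s, ∃ b : B, x = Sum.inr b)).image
            fun s => s.preimage Sum.inr Sum.inr_injective.injOn)) := by
  -- the statement decides its filter predicate by another instance than `restrictParts` does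
  convert ordinalSum_pTransverseParts_iff P1 P2 π.parts using 3 <;> unfold restrictParts <;> congr!
end

section
/- Let A_ℓ(t) denote the coefficient of x₁x₂···x_ℓ in the formal power series (1 − ∑_{j=1}^{∞} e_j(x)·(t−1)(2t−1)···((j−1)t−1))^{−1}, where e_j is the j-th elementary symmetric function in infinitely many variables. Then A_{ℓ+1}(t) = (1 + ℓt)·A_ℓ(t) for all ℓ ≥ 1, and hence A_ℓ(t) = 1·(1+t)(1+2t)···(1+(ℓ−1)t). -/
open scoped Classical

noncomputable section

/-- `⟨t⟩_j = (t−1)(2t−1)⋯((j−1)t−1)`, a polynomial in `t` with `j − 1` factors. -/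
def bracket (j : ℕ) : Polynomial ℤ :=
  ∏ i ∈ Finset.range (j - 1), (Polynomial.C ((i : ℤ) + 1) * Polynomial.X - 1)

/-- The formal power series `∑_{j=1}^{∞} e_j(x)·⟨t⟩_j` in the variables `x₀, x₁, x₂, …`
(indexed by `ℕ`), with coefficients in `ℤ[t]`: since `e_j` is the sum of all squarefree
monomials of degree `j`, the coefficient of a monomial `d` is `⟨t⟩_{|supp d|}` if `d` is
squarefree and nonzero, and `0` otherwise. -/
def eSeries : MvPowerSeries ℕ (Polynomial ℤ) := fun d =>
  if (∀ i ∈ d.support, d i = 1) ∧ d.support.Nonempty then bracket d.support.card else 0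

/-- The exponent vector of the squarefree monomial `x₀x₁⋯x_{ℓ−1}` (the first `ℓ` variables). -/
def sqfree (ℓ : ℕ) : ℕ →₀ ℕ := ∑ i ∈ Finset.range ℓ, Finsupp.single i 1


/-!
Write `g_S` for the coefficient in `G` of the squarefree monomial `∏_{i ∈ S} x_i`. The
coefficient of such a monomial in `1 - E` depends only on `j = |S|`: it is
`u_j = ∏_{k<j} (kt - 1)` (the `k = 0` factor supplies the sign). Comparing coefficients in
`(1 - E) * G = 1` gives `∑_{T ⊆ S} u_{|T|} g_{S \ T} = [S = ∅]`, and since `u_0 = 1` this system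
has exactly one solution. The candidate `g_S = ∏_{k<|S|} (kt + 1)` solves it: `u_j` and
`∏_{k<j} (kt + 1)` are the exponential coefficients of `(1 - tx)^{1/t}` and `(1 - tx)^{-1/t}`,
so their binomial convolution vanishes in positive degree. Concretely, two sequences with
`a_{i+1} = a_i (it + r)` and `b_{j+1} = b_j (jt + s)` have binomial convolution `w` with
`w_{n+1} = (nt + r + s) w_n`, and here `r + s = 0`.
-/

open Finset

theorem sum_antidiagonal_choose_mul_succ {R : Type*} [CommSemiring R] {a b : ℕ → R} {c r s : R}
    (ha : ∀ i, a (i + 1) = a i * (i * c + r)) (hb : ∀ j, b (j + 1) = b j * (j * c + s))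
    (n : ℕ) :
    ∑ ij ∈ antidiagonal (n + 1), ((n + 1).choose ij.1 : R) * (a ij.1 * b ij.2) =
      (n * c + r + s) * ∑ ij ∈ antidiagonal n, (n.choose ij.1 : R) * (a ij.1 * b ij.2) := by
  rw [sum_antidiagonal_choose_succ_mul (fun i j => a i * b j), ← sum_add_distrib, mul_sum]
  refine sum_congr rfl fun ij hij => ?_
  rw [HasAntidiagonal.mem_antidiagonal] at hij
  have hn : (ij.1 + ij.2 : R) = n := by rw [← hij, Nat.cast_add]
  rw [← Nat.choose_symm_of_eq_add hij.symm, ha, hb, ← hn]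
  ring

theorem sum_antidiagonal_choose_mul_prod_range_sub_mul_prod_range_add {R : Type*} [CommRing R]
    (c r : R) (n : ℕ) :
    ∑ ij ∈ antidiagonal n, (n.choose ij.1 : R) *
        ((∏ k ∈ range ij.1, (k * c - r)) * ∏ k ∈ range ij.2, (k * c + r)) =
      if n = 0 then 1 else 0 := by
  induction n with
  | zero => simp
  | succ n ih =>
    rw [sum_antidiagonal_choose_mul_succ (a := fun i => ∏ k ∈ range i, (k * c - r))
      (b := fun j => ∏ k ∈ range j, (k * c + r)) (r := -r) (s := r)
      (fun i => by rw [prod_range_succ, sub_eq_add_neg]) (fun j => prod_range_succ _ _), ih]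
    split_ifs <;> simp_all

section SquarefreeMonomials

variable {σ : Type*} [DecidableEq σ]

def sqfreeOn (S : Finset σ) : σ →₀ ℕ := ∑ i ∈ S, Finsupp.single i 1

theorem sqfreeOn_apply (S : Finset σ) (i : σ) : sqfreeOn S i = if i ∈ S then 1 else 0 := by
  simp [sqfreeOn, Finsupp.finsetSum_apply, Finsupp.single_apply]

@[simp]
theorem support_sqfreeOn (S : Finset σ) : (sqfreeOn S).support = S := by
  ext i
  simp [sqfreeOn_apply]

theorem sqfreeOn_eq_zero_iff {S : Finset σ} : sqfreeOn S = 0 ↔ S = ∅ := by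
  rw [← Finsupp.support_eq_empty, support_sqfreeOn]

theorem sqfreeOn_add_sqfreeOn_sdiff {S T : Finset σ} (hT : T ⊆ S) :
    sqfreeOn T + sqfreeOn (S \ T) = sqfreeOn S := by
  rw [sqfreeOn, sqfreeOn, add_comm, sum_sdiff hT, sqfreeOn]

theorem mem_antidiagonal_sqfreeOn {S : Finset σ} {p : (σ →₀ ℕ) × (σ →₀ ℕ)} :
    p ∈ antidiagonal (sqfreeOn S) ↔ ∃ T ⊆ S, (sqfreeOn T, sqfreeOn (S \ T)) = p := by
  rw [HasAntidiagonal.mem_antidiagonal]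
  constructor
  · intro hp
    have hpi (i : σ) : p.1 i + p.2 i = if i ∈ S then 1 else 0 := by
      rw [← sqfreeOn_apply, ← hp, Finsupp.add_apply]
    have hTS : p.1.support ⊆ S := fun i hi => by
      by_contra hiS
      have := hpi i
      rw [if_neg hiS] at this
      exact Finsupp.mem_support_iff.mp hi (by omega)
    have h1 : sqfreeOn p.1.support = p.1 := by
      ext i
      have := hpi i
      simp only [sqfreeOn_apply, Finsupp.mem_support_iff]
      split_ifs at this ⊢ <;> omega
    refine ⟨p.1.support, hTS, Prod.ext h1 ?_⟩
    apply add_left_cancel (a := p.1)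
    rw [hp, ← sqfreeOn_add_sqfreeOn_sdiff hTS, h1]
  · rintro ⟨T, hT, rfl⟩
    exact sqfreeOn_add_sqfreeOn_sdiff hT

variable {R : Type*} [Semiring R]

theorem MvPowerSeries.coeff_mul_sqfreeOn (S : Finset σ) (f g : MvPowerSeries σ R) :
    coeff (sqfreeOn S) (f * g) =
      ∑ T ∈ S.powerset, coeff (sqfreeOn T) f * coeff (sqfreeOn (S \ T)) g := by
  rw [coeff_mul, eq_comm]
  refine sum_nbij (fun T => (sqfreeOn T, sqfreeOn (S \ T)))
    (fun T hT => mem_antidiagonal_sqfreeOn.mpr ⟨T, mem_powerset.mp hT, rfl⟩) ?_ ?_ fun _ _ => rfl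
  · intro T _ T' _ h
    simpa using congrArg (fun p => p.1.support) h
  · intro p hp
    obtain ⟨T, hT, rfl⟩ := mem_antidiagonal_sqfreeOn.mp hp
    exact ⟨T, mem_powerset.mpr hT, rfl⟩

theorem Finset.eq_zero_of_sum_powerset_mul_sdiff_eq_zero {u h : Finset σ → R} (hu : u ∅ = 1)
    (hsum : ∀ S, ∑ T ∈ S.powerset, u T * h (S \ T) = 0) (S : Finset σ) : h S = 0 := by
  induction S using Finset.strongInduction with
  | H S ih =>
    rw [← hsum S, sum_eq_single_of_mem ∅ (empty_mem_powerset S), hu, one_mul, sdiff_empty]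
    intro T hT hT0
    rw [ih _ (sdiff_ssubset (mem_powerset.mp hT) (nonempty_iff_ne_empty.mpr hT0)), mul_zero]

end SquarefreeMonomials

open Polynomial

theorem coeff_sqfreeOn_one_sub_eSeries (T : Finset ℕ) :
    MvPowerSeries.coeff (sqfreeOn T) (1 - eSeries) = ∏ k ∈ range #T, ((k : ℤ[X]) * X - 1) := by
  rw [map_sub, MvPowerSeries.coeff_one, MvPowerSeries.coeff_apply]
  simp only [sqfreeOn_eq_zero_iff]
  rcases T.eq_empty_or_nonempty with rfl | hT
  · simp [eSeries]
  obtain ⟨m, hm⟩ : ∃ m, #T = m + 1 := Nat.exists_eq_succ_of_ne_zero hT.card_pos.ne'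
  have hsqfree : ∀ i ∈ T, sqfreeOn T i = 1 := by simp [sqfreeOn_apply]
  rw [eSeries, support_sqfreeOn, if_neg hT.ne_empty, if_pos ⟨hsqfree, hT⟩, hm, bracket,
    prod_range_succ', Nat.add_sub_cancel]
  simp

theorem coeff_sqfreeOn_of_one_sub_eSeries_mul_eq_one {G : MvPowerSeries ℕ ℤ[X]}
    (hG : (1 - eSeries) * G = 1) (S : Finset ℕ) :
    MvPowerSeries.coeff (sqfreeOn S) G = ∏ k ∈ range #S, ((k : ℤ[X]) * X + 1) := by
  rw [← sub_eq_zero]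
  refine eq_zero_of_sum_powerset_mul_sdiff_eq_zero
    (u := fun T => MvPowerSeries.coeff (sqfreeOn T) (1 - eSeries))
    (h := fun S => MvPowerSeries.coeff (sqfreeOn S) G - ∏ k ∈ range #S, ((k : ℤ[X]) * X + 1))
    (by simp [coeff_sqfreeOn_one_sub_eSeries]) (fun S => ?_) S
  have hconv : ∑ T ∈ S.powerset, MvPowerSeries.coeff (sqfreeOn T) (1 - eSeries) *
      ∏ k ∈ range #(S \ T), ((k : ℤ[X]) * X + 1) = if #S = 0 then 1 else 0 := by
    rw [sum_congr rfl fun T hT => by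
        rw [coeff_sqfreeOn_one_sub_eSeries, card_sdiff_of_subset (mem_powerset.mp hT)],
      sum_powerset_apply_card (fun m =>
        (∏ k ∈ range m, ((k : ℤ[X]) * X - 1)) * ∏ k ∈ range (#S - m), ((k : ℤ[X]) * X + 1)),
      ← sum_antidiagonal_choose_mul_prod_range_sub_mul_prod_range_add X 1,
      Nat.sum_antidiagonal_eq_sum_range_succ (fun i j => ((#S).choose i : ℤ[X]) *
        ((∏ k ∈ range i, ((k : ℤ[X]) * X - 1)) * ∏ k ∈ range j, ((k : ℤ[X]) * X + 1)))]
    simp only [nsmul_eq_mul]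
  simp only [mul_sub, sum_sub_distrib, ← MvPowerSeries.coeff_mul_sqfreeOn, hG, hconv,
    MvPowerSeries.coeff_one, sqfreeOn_eq_zero_iff, card_eq_zero, sub_self]

/-- Let `A_ℓ(t)` be the coefficient of `x₁x₂⋯x_ℓ` in the formal power series
`(1 − ∑_{j≥1} e_j(x)·(t−1)(2t−1)⋯((j−1)t−1))^{−1}` (in infinitely many variables).
Then `A_{ℓ+1}(t) = (1 + ℓt)·A_ℓ(t)` for all `ℓ ≥ 1`, and hence
`A_ℓ(t) = 1·(1+t)(1+2t)⋯(1+(ℓ−1)t)`. -/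
theorem stmt19 (G : MvPowerSeries ℕ (Polynomial ℤ))
    (hG : (1 - eSeries) * G = 1) :
    (∀ ℓ : ℕ, 1 ≤ ℓ →
      MvPowerSeries.coeff (R := Polynomial ℤ) (sqfree (ℓ + 1)) G =
        (1 + Polynomial.C (ℓ : ℤ) * Polynomial.X) *
          MvPowerSeries.coeff (R := Polynomial ℤ) (sqfree ℓ) G) ∧
    (∀ ℓ : ℕ, 1 ≤ ℓ →
      MvPowerSeries.coeff (R := Polynomial ℤ) (sqfree ℓ) G =
        ∏ i ∈ Finset.range ℓ, (1 + Polynomial.C (i : ℤ) * Polynomial.X)) := by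
  have hA (ℓ : ℕ) : MvPowerSeries.coeff (sqfree ℓ) G = ∏ i ∈ range ℓ, (1 + C (i : ℤ) * X) := by
    rw [show sqfree ℓ = sqfreeOn (range ℓ) from rfl,
      coeff_sqfreeOn_of_one_sub_eSeries_mul_eq_one hG, card_range]
    simp [add_comm]
  exact ⟨fun ℓ _ => by rw [hA, hA, prod_range_succ, mul_comm], fun ℓ _ => hA ℓ⟩
end
end
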